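/- arXiv:2605.10080 — 7 statements merged into one kernel-verified Lean document; each statement's English description precedes it below -/
import Mathlib

section
/- Let Ω ⊆ ℝⁿ be a nonempty closed convex set. For any x, z ∈ Ω and any ξ ∈ ℝⁿ, if q is the Euclidean projection of ξ onto the tangent cone T_Ω(x), then ⟨x − z, q⟩ ≤ ⟨x − z, ξ⟩. -/
open Matrix

/-- Euclidean norm on `Fin k → ℝ`. -/
noncomputable def eNorm {k : ℕ} (x : Fin k → ℝ) : ℝ := Real.sqrt (x ⬝ᵥ x)

/-- Tangent cone of `S` at `x`: closure of `{α • (z - x) : α ≥ 0, z ∈ S}`. -/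
def tangentConeOf {k : ℕ} (S : Set (Fin k → ℝ)) (x : Fin k → ℝ) : Set (Fin k → ℝ) :=
  closure {y | ∃ α : ℝ, 0 ≤ α ∧ ∃ z ∈ S, y = α • (z - x)}

/-- `q` is the Euclidean projection of `y` onto `K`. -/
def IsEuclideanProj {k : ℕ} (K : Set (Fin k → ℝ)) (y q : Fin k → ℝ) : Prop :=
  q ∈ K ∧ ∀ w ∈ K, eNorm (y - q) ≤ eNorm (y - w)

/-!
The tangent cone `T` of a convex set `Ω` at `x` is a convex cone containing `z - x` for every
`z ∈ Ω`, so `q + (z - x) ∈ T`. The variational inequality characterising the projection `q` of `ξ`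
onto the convex set `T`, tested at this point, reads `⟨ξ - q, z - x⟩ ≤ 0`.
-/

section Euclidean

variable {k : ℕ}

lemma eNorm_eq_norm_toLp (v : Fin k → ℝ) : eNorm v = ‖WithLp.toLp 2 v‖ := by
  rw [norm_eq_sqrt_real_inner]
  rfl

lemma dotProduct_eq_inner_toLp (u v : Fin k → ℝ) :
    u ⬝ᵥ v = inner ℝ (WithLp.toLp 2 u) (WithLp.toLp 2 v) := by
  rw [EuclideanSpace.inner_toLp_toLp, star_trivial, dotProduct_comm]

theorem IsEuclideanProj.dotProduct_sub_nonpos {K : Set (Fin k → ℝ)} {y q w : Fin k → ℝ}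
    (hK : Convex ℝ K) (h : IsEuclideanProj K y q) (hw : w ∈ K) :
    (y - q) ⬝ᵥ (w - q) ≤ 0 := by
  set K' : Set (EuclideanSpace ℝ (Fin k)) := WithLp.ofLp ⁻¹' K
  have hK' : Convex ℝ K' := hK.linear_preimage (WithLp.linearEquiv 2 ℝ (Fin k → ℝ)).toLinearMap
  have hq' : WithLp.toLp 2 q ∈ K' := h.1
  have hmin : ‖WithLp.toLp 2 y - WithLp.toLp 2 q‖ = ⨅ w : K', ‖WithLp.toLp 2 y - w‖ := by
    have : Nonempty K' := ⟨⟨_, hq'⟩⟩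
    have hbdd : BddBelow (Set.range fun w : K' ↦ ‖WithLp.toLp 2 y - w‖) :=
      ⟨0, Set.forall_mem_range.2 fun _ ↦ norm_nonneg _⟩
    refine le_antisymm (le_ciInf fun w ↦ ?_) (ciInf_le hbdd ⟨_, hq'⟩)
    simpa only [eNorm_eq_norm_toLp, WithLp.toLp_sub] using h.2 _ w.2
  rw [dotProduct_eq_inner_toLp, WithLp.toLp_sub, WithLp.toLp_sub]
  exact (norm_eq_iInf_iff_real_inner_le_zero hK' hq').1 hmin _ hw

end Euclidean

section TangentCone

variable {k : ℕ} {S : Set (Fin k → ℝ)} {x : Fin k → ℝ}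

-- `tangentConeOf S x` is definitionally `closure (radialCone S x)`.
def radialCone (S : Set (Fin k → ℝ)) (x : Fin k → ℝ) : Set (Fin k → ℝ) :=
  {y | ∃ α : ℝ, 0 ≤ α ∧ ∃ z ∈ S, y = α • (z - x)}

lemma smul_mem_radialCone {c : ℝ} (hc : 0 ≤ c) {v : Fin k → ℝ} (hv : v ∈ radialCone S x) :
    c • v ∈ radialCone S x := by
  obtain ⟨α, hα, z, hz, rfl⟩ := hv
  exact ⟨c * α, mul_nonneg hc hα, z, hz, (mul_smul c α _).symm⟩

lemma add_mem_radialCone (hS : Convex ℝ S) {u v : Fin k → ℝ} (hu : u ∈ radialCone S x)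
    (hv : v ∈ radialCone S x) : u + v ∈ radialCone S x := by
  obtain ⟨α, hα, a, ha, rfl⟩ := hu
  obtain ⟨β, hβ, b, hb, rfl⟩ := hv
  rcases (add_nonneg hα hβ).eq_or_lt with hsum | hsum
  · obtain ⟨rfl, rfl⟩ : α = 0 ∧ β = 0 := ⟨by linarith, by linarith⟩
    exact ⟨0, le_rfl, a, ha, by simp⟩
  -- `α (a - x) + β (b - x) = (α + β) (c - x)` with `c` the corresponding convex combination of `a, b`
  refine ⟨α + β, hsum.le, (α / (α + β)) • a + (β / (α + β)) • b,
    hS ha hb (by positivity) (by positivity) (by field_simp), ?_⟩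
  rw [smul_sub (α + β), smul_add, smul_smul, smul_smul, mul_div_cancel₀ _ hsum.ne',
    mul_div_cancel₀ _ hsum.ne', add_smul, smul_sub, smul_sub]
  abel

lemma sub_mem_tangentConeOf {z : Fin k → ℝ} (hz : z ∈ S) : z - x ∈ tangentConeOf S x :=
  subset_closure ⟨1, zero_le_one, z, hz, (one_smul ℝ _).symm⟩

lemma smul_mem_tangentConeOf {c : ℝ} (hc : 0 ≤ c) {v : Fin k → ℝ} (hv : v ∈ tangentConeOf S x) :
    c • v ∈ tangentConeOf S x :=
  map_mem_closure (continuous_const_smul c) hv fun _ ↦ smul_mem_radialCone hc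

lemma add_mem_tangentConeOf (hS : Convex ℝ S) {u v : Fin k → ℝ} (hu : u ∈ tangentConeOf S x)
    (hv : v ∈ tangentConeOf S x) : u + v ∈ tangentConeOf S x :=
  map_mem_closure₂ continuous_add hu hv fun _ ha _ hb ↦ add_mem_radialCone hS ha hb

lemma convex_tangentConeOf (hS : Convex ℝ S) : Convex ℝ (tangentConeOf S x) :=
  fun _ hu _ hv _ _ ha hb _ ↦
    add_mem_tangentConeOf hS (smul_mem_tangentConeOf ha hu) (smul_mem_tangentConeOf hb hv)

end TangentCone

theorem stmt1_general {n : ℕ} (Ω : Set (Fin n → ℝ))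
    (hconv : Convex ℝ Ω) (x z : Fin n → ℝ) (hz : z ∈ Ω)
    (ξ q : Fin n → ℝ) (hq : IsEuclideanProj (tangentConeOf Ω x) ξ q) :
    (x - z) ⬝ᵥ q ≤ (x - z) ⬝ᵥ ξ := by
  have hmem : q + (z - x) ∈ tangentConeOf Ω x :=
    add_mem_tangentConeOf hconv hq.1 (sub_mem_tangentConeOf hz)
  have hvar := hq.dotProduct_sub_nonpos (convex_tangentConeOf hconv) hmem
  rw [add_sub_cancel_left, dotProduct_comm, ← neg_sub x z, neg_dotProduct, dotProduct_sub] at hvar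
  linarith

theorem stmt1 {n : ℕ} (Ω : Set (Fin n → ℝ)) (hne : Ω.Nonempty) (hcl : IsClosed Ω)
    (hconv : Convex ℝ Ω) (x z : Fin n → ℝ) (hx : x ∈ Ω) (hz : z ∈ Ω)
    (ξ q : Fin n → ℝ) (hq : IsEuclideanProj (tangentConeOf Ω x) ξ q) :
    (x - z) ⬝ᵥ q ≤ (x - z) ⬝ᵥ ξ :=
  stmt1_general Ω hconv x z hz ξ q hq
end

section
/- Assume Cᵀ·𝟙_n = 0, and assume strict feasibility: there exists (u₀, φ₀) with u_lo < u₀ < u_hi componentwise, ⟨φ₀, 𝟙_n⟩ = 0, G·u₀ − d − L·φ₀ = 0, T·B·Cᵀ·φ₀ = P^sch, and f_lo < B·Cᵀ·φ₀ < f_hi componentwise. Then a pair (u*, φ*) minimizes J over the feasible set F if and only if (u*, φ*) ∈ F and there exist λ ∈ ℝⁿ, π ∈ ℝ^{n_t}, and ρ⁺, ρ⁻ ∈ ℝ^m with ρ⁺ ≥ 0 and ρ⁻ ≥ 0 componentwise such that: (i) ⟨ρ⁺, B·Cᵀ·φ* − f_hi⟩ = 0 and ⟨ρ⁻, f_lo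 − B·Cᵀ·φ*⟩ = 0; (ii) ⟨∇J(u*) + Gᵀ·λ, z − u*⟩ ≥ 0 for all z ∈ Ω; (iii) −L·λ + C·B·Tᵀ·π + C·B·(ρ⁺ − ρ⁻) = 0. -/
/-!
As `J` is convex and differentiable and `F` is convex, `(u*, φ*)` minimizes `J` on `F` iff
`⟨∇J(u*), u - u*⟩ ≥ 0` on `F`, i.e. iff it solves the linear program with objective `⟨∇J(u*), ·⟩`
over the polyhedron `F`. The KKT conditions imply this by weak duality. Conversely, the strictly
feasible point is a Slater point: separating the origin from the open convex set of values strictly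
dominated by points satisfying the equality constraints gives nonnegative multipliers for all
bounds. The linear part of the resulting Lagrangian then vanishes on the kernel of the equality
constraints, so it is a combination of them; this yields `λ`, `π` and a multiplier of the gauge
condition `⟨φ, 𝟙⟩ = 0`, which vanishes because `Cᵀ 𝟙 = 0`. The multipliers of the box `Ω` combine
into the variational inequality.
-/

open Matrix Filter Topology

theorem dotProductEquiv_symm_dotProduct {R ι : Type*} [CommSemiring R] [Fintype ι] [DecidableEq ι]
    (f : Module.Dual R (ι → R)) (v : ι → R) : (dotProductEquiv R ι).symm f ⬝ᵥ v = f v :=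
  LinearMap.congr_fun ((dotProductEquiv R ι).apply_symm_apply f) v

theorem transpose_mulVec_dotProduct {R ι κ : Type*} [CommSemiring R] [Fintype ι] [Fintype κ]
    (A : Matrix ι κ R) (v : ι → R) (w : κ → R) : (Aᵀ *ᵥ v) ⬝ᵥ w = v ⬝ᵥ (A *ᵥ w) := by
  rw [dotProduct_comm, dotProduct_transpose_mulVec]

theorem transpose_mul_mul_transpose_of_symm {R k l m : Type*} [CommSemiring R] [Fintype m]
    {B : Matrix m m R} (hB : Bᵀ = B) (X : Matrix k m R) (C : Matrix l m R) :
    (X * B * Cᵀ)ᵀ = C * B * Xᵀ := by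
  rw [transpose_mul, transpose_mul, transpose_transpose, hB, Matrix.mul_assoc]

theorem transpose_mul_transpose_of_symm {R l m : Type*} [CommSemiring R] [Fintype m]
    {B : Matrix m m R} (hB : Bᵀ = B) (C : Matrix l m R) : (B * Cᵀ)ᵀ = C * B := by
  rw [transpose_mul, transpose_transpose, hB]

theorem dotProduct_sub_nonpos_of_complementary {ι : Type*} [Fintype ι] {ρhi ρlo lo hi z z' : ι → ℝ}
    (hρhi : 0 ≤ ρhi) (hρlo : 0 ≤ ρlo) (hhi : ρhi ⬝ᵥ (z' - hi) = 0) (hlo : ρlo ⬝ᵥ (lo - z') = 0)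
    (hz_lo : lo ≤ z) (hz_hi : z ≤ hi) : (ρhi - ρlo) ⬝ᵥ (z - z') ≤ 0 := by
  have h₁ := dotProduct_nonneg_of_nonneg hρhi (sub_nonneg.2 hz_hi)
  have h₂ := dotProduct_nonneg_of_nonneg hρlo (sub_nonneg.2 hz_lo)
  simp only [sub_dotProduct, dotProduct_sub] at *
  linarith

theorem exists_dotProduct_repr_prod {R ι κ : Type*} [CommSemiring R] [Fintype ι] [Fintype κ]
    [DecidableEq ι] [DecidableEq κ] (y : Module.Dual R ((ι → R) × (κ → R) × R)) :
    ∃ (p : ι → R) (q : κ → R) (s : R), ∀ a b t, y (a, b, t) = p ⬝ᵥ a + q ⬝ᵥ b + t * s := by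
  refine ⟨(dotProductEquiv R ι).symm (y ∘ₗ LinearMap.inl R _ _),
    (dotProductEquiv R κ).symm (y ∘ₗ LinearMap.inr R _ _ ∘ₗ LinearMap.inl R _ _), y (0, 0, 1),
    fun a b t => ?_⟩
  have : (a, b, t) = ((a, 0, 0) : _ × _ × R) + (0, b, 0) + t • (0, 0, 1) := by simp
  rw [this, map_add, map_add, map_smul, dotProductEquiv_symm_dotProduct,
    dotProductEquiv_symm_dotProduct, smul_eq_mul]
  rfl

theorem LinearMap.exists_dual_comp_eq_of_ker_le {K E F : Type*} [Field K] [AddCommGroup E]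
    [Module K E] [AddCommGroup F] [Module K F] (M : E →ₗ[K] F) {φ : Module.Dual K E}
    (h : ker M ≤ ker φ) : ∃ y : Module.Dual K F, y ∘ₗ M = φ := by
  have hφ : φ ∈ (ker M).dualAnnihilator := (Submodule.mem_dualAnnihilator _).2 fun v hv => h hv
  rw [← range_dualMap_eq_dualAnnihilator_ker] at hφ
  exact hφ

theorem nonneg_of_forall_pos_add_mul {a b : ℝ} (h : ∀ ε > 0, 0 < a + ε * b) : 0 ≤ a := by
  have hlim : Tendsto (fun ε : ℝ => a + ε * b) (𝓝[>] 0) (𝓝 a) := by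
    have : Continuous fun ε : ℝ => a + ε * b := by fun_prop
    simpa using (this.tendsto 0).mono_left nhdsWithin_le_nhds
  exact ge_of_tendsto hlim (eventually_nhdsWithin_of_forall fun ε hε => (h ε hε).le)

theorem exists_dotProduct_pos_of_zero_notMem {ι : Type*} [Fintype ι] {A : Set (ι → ℝ)}
    (hconv : Convex ℝ A) (hopen : IsOpen A) (h0 : 0 ∉ A) : ∃ c : ι → ℝ, ∀ s ∈ A, 0 < c ⬝ᵥ s := by
  classical
  obtain ⟨f, hf⟩ := geometric_hahn_banach_point_open hconv hopen h0
  refine ⟨(dotProductEquiv ℝ ι).symm f.toLinearMap, fun s hs => ?_⟩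
  simpa [dotProductEquiv_symm_dotProduct] using hf s hs

/-- The theorem of the alternative of Fan, Glicksberg and Hoffman. -/
theorem exists_nonneg_sum_mul_nonneg_of_convexOn {E ι : Type*} [AddCommGroup E] [Module ℝ E]
    [Fintype ι] {V : Set E} {g : ι → E → ℝ} (hg : ∀ i, ConvexOn ℝ V (g i)) (hV : V.Nonempty)
    (h : ∀ w ∈ V, ∃ i, 0 ≤ g i w) :
    ∃ c : ι → ℝ, 0 ≤ c ∧ c ≠ 0 ∧ ∀ w ∈ V, 0 ≤ ∑ i, c i * g i w := by
  obtain ⟨w₀, hw₀⟩ := hV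
  set A : Set (ι → ℝ) := ⋃ w ∈ V, Set.univ.pi fun i => Set.Ioi (g i w)
  have mem_A {s : ι → ℝ} {w : E} (hw : w ∈ V) (hs : ∀ i, g i w < s i) : s ∈ A :=
    Set.mem_biUnion hw (Set.mem_univ_pi.2 hs)
  have hA_conv : Convex ℝ A := by
    intro s hs t ht a b ha hb hab
    obtain ⟨w, hw, hsw⟩ := Set.mem_iUnion₂.1 hs
    obtain ⟨w', hw', htw'⟩ := Set.mem_iUnion₂.1 ht
    refine mem_A ((hg (h w₀ hw₀).choose).1 hw hw' ha hb hab) fun i => ?_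
    have hgap := convex_Ioi (0 : ℝ) (Set.mem_Ioi.2 (sub_pos.2 (Set.mem_univ_pi.1 hsw i)))
      (Set.mem_Ioi.2 (sub_pos.2 (Set.mem_univ_pi.1 htw' i))) ha hb hab
    have hgi := (hg i).2 hw hw' ha hb hab
    simp only [Set.mem_Ioi, smul_eq_mul, Pi.add_apply, Pi.smul_apply] at hgap hgi ⊢
    linarith
  have hA_open : IsOpen A :=
    isOpen_biUnion fun w _ => isOpen_set_pi Set.finite_univ fun i _ => isOpen_Ioi
  obtain ⟨c, hc⟩ := exists_dotProduct_pos_of_zero_notMem hA_conv hA_open fun h0 => by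
    obtain ⟨w, hw, hw0⟩ := Set.mem_iUnion₂.1 h0
    obtain ⟨i, hi⟩ := h w hw
    exact (Set.mem_univ_pi.1 hw0 i).not_ge hi
  set s₀ : ι → ℝ := fun i => g i w₀ + 1
  have hs₀ : s₀ ∈ A := mem_A hw₀ fun i => lt_add_one _
  refine ⟨c, fun i => ?_, fun hc0 => by simpa [hc0] using hc s₀ hs₀, fun w hw => ?_⟩
  · classical
    refine nonneg_of_forall_pos_add_mul (b := c ⬝ᵥ s₀) fun ε hε => ?_
    have hmem : s₀ + ε⁻¹ • Pi.single i 1 ∈ A := mem_A hw₀ fun j => by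
      have : 0 ≤ (ε⁻¹ • Pi.single i (1 : ℝ) : ι → ℝ) j := by
        rcases eq_or_ne j i with rfl | hj <;> simp [*, hε.le]
      simp only [Pi.add_apply, s₀]
      linarith
    have := mul_pos hε (hc _ hmem)
    rw [dotProduct_add, dotProduct_smul, dotProduct_single, smul_eq_mul, mul_one, mul_add,
      mul_inv_cancel_left₀ hε.ne'] at this
    linarith
  · refine nonneg_of_forall_pos_add_mul (b := c ⬝ᵥ 1) fun ε hε => ?_
    have := hc ((fun i => g i w) + ε • 1) (mem_A hw fun i => by simpa using hε)
    rwa [dotProduct_add, dotProduct_smul, smul_eq_mul] at this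

theorem exists_lagrange_multipliers_of_slater {E ι : Type*} [AddCommGroup E] [Module ℝ E]
    [Fintype ι] {V : Set E} {J : E → ℝ} {g : ι → E → ℝ} (hJ : ConvexOn ℝ V J)
    (hg : ∀ i, ConvexOn ℝ V (g i)) {w₀ : E} (hw₀ : w₀ ∈ V) (hslater : ∀ i, g i w₀ < 0)
    {x : E} (hxg : ∀ i, g i x ≤ 0) (hx : x ∈ V)
    (hmin : ∀ w ∈ V, (∀ i, g i w ≤ 0) → J x ≤ J w) :
    ∃ ρ : ι → ℝ, 0 ≤ ρ ∧ (∀ i, ρ i * g i x = 0) ∧ ∀ w ∈ V, J x ≤ J w + ∑ i, ρ i * g i w := by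
  let G : Option ι → E → ℝ := fun o => o.elim (fun w => J w - J x) g
  have hG : ∀ o, ConvexOn ℝ V (G o) := by
    rintro (_ | i)
    · exact hJ.sub (concaveOn_const _ hJ.1)
    · exact hg i
  obtain ⟨c, hc, hc0, hcG⟩ := exists_nonneg_sum_mul_nonneg_of_convexOn hG ⟨w₀, hw₀⟩ fun w hw => by
    by_contra! hneg
    exact (hneg none).not_ge (sub_nonneg.2 (hmin w hw fun i => (hneg (some i)).le))
  simp only [Fintype.sum_option, G, Option.elim] at hcG
  have hterms_zero : ∀ (a : ι → ℝ) w, 0 ≤ a → (∀ i, g i w ≤ 0) → 0 ≤ ∑ i, a i * g i w →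
      ∀ i, a i * g i w = 0 := fun a w ha hw hsum => by
    have hf : (fun i => a i * g i w) ≤ 0 := fun i => mul_nonpos_of_nonneg_of_nonpos (ha i) (hw i)
    exact congrFun <|
      (Fintype.sum_eq_zero_iff_of_nonpos hf).1 ((Fintype.sum_nonpos hf).antisymm hsum)
  have hc_none : 0 < c none := by
    refine (show (0 : ℝ) ≤ c none from hc none).lt_of_ne' fun h0 => hc0 ?_
    have hsum := hcG w₀ hw₀
    rw [h0, zero_mul, zero_add] at hsum
    ext (_ | i)
    · exact h0
    · have := hterms_zero _ w₀ (fun i => hc _) (fun i => (hslater i).le) hsum i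
      exact (mul_eq_zero.1 this).resolve_right (hslater i).ne
  set ρ : ι → ℝ := fun i => c (some i) / c none
  have hρ : 0 ≤ ρ := fun i => div_nonneg (hc _) hc_none.le
  have hsaddle : ∀ w ∈ V, J x ≤ J w + ∑ i, ρ i * g i w := fun w hw => by
    have := div_nonneg (hcG w hw) hc_none.le
    simp only [add_div, mul_div_cancel_left₀ _ hc_none.ne', Finset.sum_div, div_mul_eq_mul_div,
      ρ] at this ⊢
    linarith
  exact ⟨ρ, hρ, hterms_zero ρ x hρ hxg (by linarith [hsaddle x hx]), hsaddle⟩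

theorem exists_bound_multipliers_of_slater {E ι : Type*} [AddCommGroup E] [Module ℝ E]
    [Fintype ι] {V : Set E} {J : E → ℝ} (hJ : ConvexOn ℝ V J) (A : E →ₗ[ℝ] ι → ℝ)
    {lo hi : ι → ℝ} {w₀ x : E} (hw₀ : w₀ ∈ V) (hlo₀ : ∀ i, lo i < A w₀ i)
    (hhi₀ : ∀ i, A w₀ i < hi i) (hx : x ∈ V) (hxlo : lo ≤ A x) (hxhi : A x ≤ hi)
    (hmin : ∀ w ∈ V, lo ≤ A w → A w ≤ hi → J x ≤ J w) :
    ∃ ρlo ρhi : ι → ℝ, 0 ≤ ρlo ∧ 0 ≤ ρhi ∧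
      (∀ i, ρlo i * (lo i - A x i) = 0) ∧ (∀ i, ρhi i * (A x i - hi i) = 0) ∧
      ∀ w ∈ V, J x ≤ J w + ρlo ⬝ᵥ (lo - A w) + ρhi ⬝ᵥ (A w - hi) := by
  let g : ι ⊕ ι → E → ℝ := Sum.elim (fun i w => lo i - A w i) (fun i w => A w i - hi i)
  have hg : ∀ k, ConvexOn ℝ V (g k) := by
    rintro (i | i)
    · exact (convexOn_const (lo i) hJ.1).sub ((LinearMap.proj i ∘ₗ A).concaveOn hJ.1)
    · exact ((LinearMap.proj i ∘ₗ A).convexOn hJ.1).sub (concaveOn_const (hi i) hJ.1)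
  obtain ⟨ρ, hρ, hslack, hsaddle⟩ := exists_lagrange_multipliers_of_slater hJ hg hw₀
    (Sum.forall.2 ⟨fun i => sub_neg.2 (hlo₀ i), fun i => sub_neg.2 (hhi₀ i)⟩)
    (Sum.forall.2 ⟨fun i => sub_nonpos.2 (hxlo i), fun i => sub_nonpos.2 (hxhi i)⟩) hx
    fun w hw hgw => hmin w hw (fun i => sub_nonpos.1 (hgw (.inl i)))
      (fun i => sub_nonpos.1 (hgw (.inr i)))
  refine ⟨ρ ∘ .inl, ρ ∘ .inr, fun i => hρ _, fun i => hρ _, fun i => hslack (.inl i),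
    fun i => hslack (.inr i), fun w hw => ?_⟩
  simpa [Fintype.sum_sum_type, g, dotProduct, add_assoc] using hsaddle w hw

theorem exists_kkt_multipliers_of_slater {E F ι : Type*} [AddCommGroup E] [Module ℝ E]
    [AddCommGroup F] [Module ℝ F] [Fintype ι] (c : Module.Dual ℝ E) (M : E →ₗ[ℝ] F)
    (A : E →ₗ[ℝ] ι → ℝ) {b : F} {lo hi : ι → ℝ} {w₀ x : E} (hw₀ : M w₀ = b)
    (hlo₀ : ∀ i, lo i < A w₀ i) (hhi₀ : ∀ i, A w₀ i < hi i) (hx : M x = b) (hxlo : lo ≤ A x)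
    (hxhi : A x ≤ hi) (hmin : ∀ w, M w = b → lo ≤ A w → A w ≤ hi → c x ≤ c w) :
    ∃ (y : Module.Dual ℝ F) (ρlo ρhi : ι → ℝ), 0 ≤ ρlo ∧ 0 ≤ ρhi ∧
      (∀ i, ρlo i * (lo i - A x i) = 0) ∧ (∀ i, ρhi i * (A x i - hi i) = 0) ∧
      ∀ v, c v + (ρhi - ρlo) ⬝ᵥ A v = y (M v) := by
  classical
  obtain ⟨ρlo, ρhi, hρlo, hρhi, hslo, hshi, hsaddle⟩ := exists_bound_multipliers_of_slater
    (c.convexOn ((convex_singleton b).linear_preimage M)) A (w₀ := w₀) hw₀ hlo₀ hhi₀ hx hxlo hxhi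
    fun w hw => hmin w hw
  have hslo' : ρlo ⬝ᵥ (lo - A x) = 0 := Finset.sum_eq_zero fun i _ => hslo i
  have hshi' : ρhi ⬝ᵥ (A x - hi) = 0 := Finset.sum_eq_zero fun i _ => hshi i
  -- Along `ker M` the Lagrangian is affine and bounded below by its value at `x`.
  have hker : ∀ v, M v = 0 → 0 ≤ c v + (ρhi - ρlo) ⬝ᵥ A v := fun v hv => by
    have := hsaddle (x + v) (by simp [hx, hv])
    simp only [map_add, sub_add_eq_sub_sub, add_sub_right_comm (A x), dotProduct_sub,
      dotProduct_add, sub_dotProduct] at this hslo' hshi' ⊢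
    linarith
  obtain ⟨y, hy⟩ := LinearMap.exists_dual_comp_eq_of_ker_le M
    (φ := c + dotProductEquiv ℝ ι (ρhi - ρlo) ∘ₗ A) fun v hv => by
      have h₁ := hker v hv
      have h₂ := hker (-v) (by simpa using hv)
      simp only [map_neg, dotProduct_neg] at h₂
      simp only [LinearMap.mem_ker, LinearMap.add_apply, LinearMap.comp_apply,
        dotProductEquiv_apply_apply]
      linarith
  exact ⟨y, ρlo, ρhi, hρlo, hρhi, hslo, hshi,
    fun v => by simpa using (LinearMap.congr_fun hy v).symm⟩

theorem ConvexOn.isMinOn_iff_forall_fderiv_nonneg {E : Type*} [NormedAddCommGroup E]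
    [NormedSpace ℝ E] {S : Set E} {f : E → ℝ} {f' : E →L[ℝ] ℝ} {x : E} (hf : ConvexOn ℝ S f)
    (hx : x ∈ S) (hf' : HasFDerivAt f f' x) : IsMinOn f S x ↔ ∀ y ∈ S, 0 ≤ f' (y - x) := by
  refine ⟨fun hmin y hy => hmin.localize.hasFDerivWithinAt_nonneg hf'.hasFDerivWithinAt
    (sub_mem_posTangentConeAt_of_segment_subset (hf.1.segment_subset hx hy)),
    fun h => isMinOn_iff.2 fun y hy => ?_⟩
  have hline : HasDerivAt (f ∘ AffineMap.lineMap (k := ℝ) x y) (f' (y - x)) 0 :=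
    hf'.comp_hasDerivAt_of_eq (x := (0 : ℝ)) AffineMap.hasDerivAt_lineMap (by simp)
  have := (hf.comp_affineMap (AffineMap.lineMap (k := ℝ) x y)).le_slope_of_hasDerivAt
    (by simpa using hx) (by simpa using hy) one_pos hline
  simp only [slope_def_field, Function.comp_apply, AffineMap.lineMap_apply_one,
    AffineMap.lineMap_apply_zero, sub_zero, div_one] at this
  linarith [h y hy]

section Dispatch

variable {n m ng nt : ℕ} (G : Matrix (Fin n) (Fin ng) ℝ) (C : Matrix (Fin n) (Fin m) ℝ)
  (B : Matrix (Fin m) (Fin m) ℝ) (T : Matrix (Fin nt) (Fin m) ℝ) (L : Matrix (Fin n) (Fin n) ℝ)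
  (d : Fin n → ℝ) (Psch : Fin nt → ℝ) (flo fhi : Fin m → ℝ) (ulo uhi : Fin ng → ℝ)

def dispatchFeasible : Set ((Fin ng → ℝ) × (Fin n → ℝ)) :=
  {q | q.1 ∈ Set.Icc ulo uhi ∧ q.2 ⬝ᵥ (fun _ => 1) = 0 ∧ G *ᵥ q.1 - d - L *ᵥ q.2 = 0 ∧
    (T * B * Cᵀ) *ᵥ q.2 = Psch ∧ flo ≤ (B * Cᵀ) *ᵥ q.2 ∧ (B * Cᵀ) *ᵥ q.2 ≤ fhi}

def dispatchEqMap : (Fin ng → ℝ) × (Fin n → ℝ) →ₗ[ℝ] (Fin n → ℝ) × (Fin nt → ℝ) × ℝ :=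
  (G.mulVecLin.coprod (-L.mulVecLin)).prod (((T * B * Cᵀ).mulVecLin ∘ₗ LinearMap.snd ℝ _ _).prod
    (dotProductEquiv ℝ (Fin n) 1 ∘ₗ LinearMap.snd ℝ _ _))

def dispatchBoundMap : (Fin ng → ℝ) × (Fin n → ℝ) →ₗ[ℝ] Fin ng ⊕ Fin m → ℝ :=
  LinearMap.pi <| Sum.elim (fun i => LinearMap.proj i ∘ₗ LinearMap.fst ℝ _ _)
    fun j => LinearMap.proj j ∘ₗ (B * Cᵀ).mulVecLin ∘ₗ LinearMap.snd ℝ _ _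

theorem dispatchEqMap_apply (q : (Fin ng → ℝ) × (Fin n → ℝ)) :
    dispatchEqMap G C B T L q = (G *ᵥ q.1 - L *ᵥ q.2, (T * B * Cᵀ) *ᵥ q.2, q.2 ⬝ᵥ 1) := by
  simp only [dispatchEqMap, LinearMap.prod_apply, Function.prod_apply, LinearMap.coprod_apply,
    LinearMap.comp_apply, LinearMap.neg_apply, Matrix.mulVecLin_apply, LinearMap.snd_apply,
    dotProductEquiv_apply_apply, dotProduct_comm 1, sub_eq_add_neg]

theorem dispatchBoundMap_apply (q : (Fin ng → ℝ) × (Fin n → ℝ)) :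
    dispatchBoundMap C B q = Sum.elim q.1 ((B * Cᵀ) *ᵥ q.2) := by
  ext (i | j) <;> rfl

theorem mem_dispatchFeasible_iff {q : (Fin ng → ℝ) × (Fin n → ℝ)} :
    q ∈ dispatchFeasible G C B T L d Psch flo fhi ulo uhi ↔
      dispatchEqMap G C B T L q = (d, Psch, 0) ∧ Sum.elim ulo flo ≤ dispatchBoundMap C B q ∧
        dispatchBoundMap C B q ≤ Sum.elim uhi fhi := by
  simp only [dispatchFeasible, dispatchEqMap_apply, dispatchBoundMap_apply, Set.mem_ofPred_eq,
    Set.mem_Icc, Prod.mk.injEq, Sum.elim_le_elim_iff, sub_right_comm _ d, sub_eq_zero]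
  tauto

theorem convex_dispatchFeasible : Convex ℝ (dispatchFeasible G C B T L d Psch flo fhi ulo uhi) := by
  have : dispatchFeasible G C B T L d Psch flo fhi ulo uhi =
      dispatchEqMap G C B T L ⁻¹' {(d, Psch, 0)} ∩
        (dispatchBoundMap C B ⁻¹' Set.Ici (Sum.elim ulo flo) ∩
          dispatchBoundMap C B ⁻¹' Set.Iic (Sum.elim uhi fhi)) :=
    Set.ext fun q => mem_dispatchFeasible_iff G C B T L d Psch flo fhi ulo uhi
  rw [this]
  exact ((convex_singleton _).linear_preimage _).inter
    (((convex_Ici _).linear_preimage _).inter ((convex_Iic _).linear_preimage _))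

theorem exists_dispatch_lagrange_multipliers (hL : L = C * B * Cᵀ)
    (hC1 : Cᵀ *ᵥ (fun _ => 1) = 0) {u₀ : Fin ng → ℝ} {φ₀ : Fin n → ℝ}
    (h₀ : (u₀, φ₀) ∈ dispatchFeasible G C B T L d Psch flo fhi ulo uhi)
    (hu₀ : ∀ i, ulo i < u₀ i ∧ u₀ i < uhi i)
    (hφ₀ : ∀ j, flo j < ((B * Cᵀ) *ᵥ φ₀) j ∧ ((B * Cᵀ) *ᵥ φ₀) j < fhi j)
    (a : Fin ng → ℝ) {u : Fin ng → ℝ} {φ : Fin n → ℝ}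
    (hx : (u, φ) ∈ dispatchFeasible G C B T L d Psch flo fhi ulo uhi)
    (hmin : ∀ q ∈ dispatchFeasible G C B T L d Psch flo fhi ulo uhi, 0 ≤ a ⬝ᵥ (q.1 - u)) :
    ∃ (lam : Fin n → ℝ) (piv : Fin nt → ℝ) (ρlo ρhi : Fin ng ⊕ Fin m → ℝ), 0 ≤ ρlo ∧ 0 ≤ ρhi ∧
      (∀ k, ρlo k * (Sum.elim ulo flo k - Sum.elim u ((B * Cᵀ) *ᵥ φ) k) = 0) ∧
      (∀ k, ρhi k * (Sum.elim u ((B * Cᵀ) *ᵥ φ) k - Sum.elim uhi fhi k) = 0) ∧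
      ∀ v₁ v₂, a ⬝ᵥ v₁ + (ρhi - ρlo) ⬝ᵥ Sum.elim v₁ ((B * Cᵀ) *ᵥ v₂) =
        lam ⬝ᵥ (G *ᵥ v₁ - L *ᵥ v₂) + piv ⬝ᵥ ((T * B * Cᵀ) *ᵥ v₂) := by
  have hmem := fun q => mem_dispatchFeasible_iff G C B T L d Psch flo fhi ulo uhi (q := q)
  obtain ⟨hxM, hxlo, hxhi⟩ := (hmem _).1 hx
  obtain ⟨y, ρlo, ρhi, hρlo, hρhi, hslo, hshi, hstat⟩ := exists_kkt_multipliers_of_slater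
    (dotProductEquiv ℝ _ a ∘ₗ LinearMap.fst ℝ _ _) (dispatchEqMap G C B T L) (dispatchBoundMap C B)
    ((hmem _).1 h₀).1 (Sum.forall.2 ⟨fun i => (hu₀ i).1, fun j => (hφ₀ j).1⟩)
    (Sum.forall.2 ⟨fun i => (hu₀ i).2, fun j => (hφ₀ j).2⟩) hxM hxlo hxhi
    fun w hwM hwlo hwhi => by
      simpa [dotProduct_sub] using hmin w ((hmem _).2 ⟨hwM, hwlo, hwhi⟩)
  obtain ⟨lam, piv, ν, hy⟩ := exists_dotProduct_repr_prod y
  have hst : ∀ v₁ v₂, a ⬝ᵥ v₁ + (ρhi - ρlo) ⬝ᵥ Sum.elim v₁ ((B * Cᵀ) *ᵥ v₂) =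
      lam ⬝ᵥ (G *ᵥ v₁ - L *ᵥ v₂) + piv ⬝ᵥ ((T * B * Cᵀ) *ᵥ v₂) + (v₂ ⬝ᵥ 1) * ν := fun v₁ v₂ => by
    simpa [dispatchEqMap_apply, dispatchBoundMap_apply, hy] using hstat (v₁, v₂)
  have hC1' : ∀ {k : Type} [Fintype k] (X : Matrix k (Fin m) ℝ), (X * Cᵀ) *ᵥ 1 = 0 :=
    fun X => by rw [← mulVec_mulVec]; exact (congrArg (X *ᵥ ·) hC1).trans (mulVec_zero X)
  -- At `v = (0, 𝟙)` only the term of the gauge multiplier `ν` survives, since `Cᵀ 𝟙 = 0`.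
  have hν : ∀ v₂ : Fin n → ℝ, (v₂ ⬝ᵥ 1) * ν = 0 := by
    have h1 := hst 0 1
    rw [hL, hC1', hC1', hC1'] at h1
    simp only [dotProduct_zero, mulVec_zero, sub_zero, Sum.elim_zero_zero, add_zero,
      zero_add] at h1
    rcases mul_eq_zero.1 h1.symm with h | h
    · intro v₂; rw [dotProduct_self_eq_zero.1 h, dotProduct_zero, zero_mul]
    · intro v₂; rw [h, mul_zero]
  refine ⟨lam, piv, ρlo, ρhi, hρlo, hρhi, fun k => ?_, fun k => ?_, fun v₁ v₂ => ?_⟩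
  · simpa [dispatchBoundMap_apply] using hslo k
  · simpa [dispatchBoundMap_apply] using hshi k
  · rw [hst, hν, add_zero]

theorem exists_dispatch_kkt_multipliers (hBt : Bᵀ = B) (hL : L = C * B * Cᵀ)
    (hC1 : Cᵀ *ᵥ (fun _ => 1) = 0)
    (hsf : ∃ u₀ : Fin ng → ℝ, ∃ φ₀ : Fin n → ℝ,
      (∀ i, ulo i < u₀ i ∧ u₀ i < uhi i) ∧
      φ₀ ⬝ᵥ (fun _ => 1) = 0 ∧ G *ᵥ u₀ - d - L *ᵥ φ₀ = 0 ∧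
      (T * B * Cᵀ) *ᵥ φ₀ = Psch ∧
      (∀ j, flo j < ((B * Cᵀ) *ᵥ φ₀) j ∧ ((B * Cᵀ) *ᵥ φ₀) j < fhi j))
    (a : Fin ng → ℝ) {u : Fin ng → ℝ} {φ : Fin n → ℝ}
    (hx : (u, φ) ∈ dispatchFeasible G C B T L d Psch flo fhi ulo uhi)
    (hmin : ∀ q ∈ dispatchFeasible G C B T L d Psch flo fhi ulo uhi, 0 ≤ a ⬝ᵥ (q.1 - u)) :
    ∃ lam piv rp rm, 0 ≤ rp ∧ 0 ≤ rm ∧ rp ⬝ᵥ ((B * Cᵀ) *ᵥ φ - fhi) = 0 ∧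
      rm ⬝ᵥ (flo - (B * Cᵀ) *ᵥ φ) = 0 ∧ (∀ z ∈ Set.Icc ulo uhi, 0 ≤ (a + Gᵀ *ᵥ lam) ⬝ᵥ (z - u)) ∧
      -(L *ᵥ lam) + (C * B * Tᵀ) *ᵥ piv + (C * B) *ᵥ (rp - rm) = 0 := by
  obtain ⟨u₀, φ₀, hu₀, h₀1, h₀2, h₀3, hφ₀⟩ := hsf
  obtain ⟨lam, piv, ρlo, ρhi, hρlo, hρhi, hslo, hshi, hst⟩ :=
    exists_dispatch_lagrange_multipliers G C B T L d Psch flo fhi ulo uhi hL hC1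
      ⟨⟨fun i => (hu₀ i).1.le, fun i => (hu₀ i).2.le⟩, h₀1, h₀2, h₀3, fun j => (hφ₀ j).1.le,
        fun j => (hφ₀ j).2.le⟩ hu₀ hφ₀ a hx hmin
  rw [← Sum.elim_comp_inl_inr (ρhi - ρlo)] at hst
  simp only [sumElim_dotProduct_sumElim] at hst
  refine ⟨-lam, -piv, ρhi ∘ .inr, ρlo ∘ .inr, fun j => hρhi _, fun j => hρlo _,
    Finset.sum_eq_zero fun j _ => hshi (.inr j), Finset.sum_eq_zero fun j _ => hslo (.inr j),
    fun z hz => ?_, dotProduct_eq_zero _ fun w => ?_⟩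
  · have key : (a + Gᵀ *ᵥ -lam) ⬝ᵥ (z - u) = -((ρhi - ρlo) ∘ .inl ⬝ᵥ (z - u)) := by
      have := hst (z - u) 0
      rw [add_dotProduct, mulVec_neg, neg_dotProduct, transpose_mulVec_dotProduct]
      simp only [mulVec_zero, dotProduct_zero, sub_zero, add_zero] at this
      linarith
    rw [key, neg_nonneg]
    exact dotProduct_sub_nonpos_of_complementary (fun i => hρhi _) (fun i => hρlo _)
      (Finset.sum_eq_zero fun i _ => hshi (.inl i)) (Finset.sum_eq_zero fun i _ => hslo (.inl i))
      hz.1 hz.2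
  · have := hst 0 w
    simp only [mulVec_zero, dotProduct_zero, zero_sub, zero_add, dotProduct_neg] at this
    have hLt : Lᵀ = L := hL ▸ transpose_mul_mul_transpose_of_symm hBt C C
    rw [← hLt, ← transpose_mul_mul_transpose_of_symm hBt T C,
      ← transpose_mul_transpose_of_symm hBt C,
      ← Pi.sub_comp, add_dotProduct, add_dotProduct, neg_dotProduct, transpose_mulVec_dotProduct,
      transpose_mulVec_dotProduct, transpose_mulVec_dotProduct, neg_dotProduct, neg_dotProduct]
    linarith

theorem dotProduct_sub_nonneg_of_dispatch_kkt (hBt : Bᵀ = B) (hL : L = C * B * Cᵀ)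
    {a u : Fin ng → ℝ} {φ : Fin n → ℝ}
    (hx : (u, φ) ∈ dispatchFeasible G C B T L d Psch flo fhi ulo uhi)
    {lam : Fin n → ℝ} {piv : Fin nt → ℝ} {rp rm : Fin m → ℝ} (hrp : 0 ≤ rp) (hrm : 0 ≤ rm)
    (hcp : rp ⬝ᵥ ((B * Cᵀ) *ᵥ φ - fhi) = 0) (hcm : rm ⬝ᵥ (flo - (B * Cᵀ) *ᵥ φ) = 0)
    (hvi : ∀ z ∈ Set.Icc ulo uhi, 0 ≤ (a + Gᵀ *ᵥ lam) ⬝ᵥ (z - u))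
    (hst : -(L *ᵥ lam) + (C * B * Tᵀ) *ᵥ piv + (C * B) *ᵥ (rp - rm) = 0) :
    ∀ q ∈ dispatchFeasible G C B T L d Psch flo fhi ulo uhi, 0 ≤ a ⬝ᵥ (q.1 - u) := by
  rintro ⟨u', φ'⟩ ⟨hu', -, hG', hT', hlo', hhi'⟩
  obtain ⟨-, -, hG, hT, -, -⟩ := hx
  have hLlam : L *ᵥ lam = (C * B * Tᵀ) *ᵥ piv + (C * B) *ᵥ (rp - rm) :=
    neg_add_eq_zero.1 (by rw [← add_assoc]; exact hst)
  have hpair : (Gᵀ *ᵥ lam) ⬝ᵥ (u' - u) = (rp - rm) ⬝ᵥ ((B * Cᵀ) *ᵥ φ' - (B * Cᵀ) *ᵥ φ) := by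
    have hGL : G *ᵥ (u' - u) = L *ᵥ (φ' - φ) := by
      rw [mulVec_sub, mulVec_sub]; linear_combination hG' - hG
    calc (Gᵀ *ᵥ lam) ⬝ᵥ (u' - u) = lam ⬝ᵥ (L *ᵥ (φ' - φ)) := by
          rw [transpose_mulVec_dotProduct, hGL]
      _ = (L *ᵥ lam) ⬝ᵥ (φ' - φ) := by
          rw [← transpose_mulVec_dotProduct, hL, transpose_mul_mul_transpose_of_symm hBt]
      _ = piv ⬝ᵥ ((T * B * Cᵀ) *ᵥ (φ' - φ)) + (rp - rm) ⬝ᵥ ((B * Cᵀ) *ᵥ (φ' - φ)) := by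
          rw [hLlam, add_dotProduct, ← transpose_mul_mul_transpose_of_symm hBt T C,
            ← transpose_mul_transpose_of_symm hBt C, transpose_mulVec_dotProduct,
            transpose_mulVec_dotProduct]
      _ = (rp - rm) ⬝ᵥ ((B * Cᵀ) *ᵥ φ' - (B * Cᵀ) *ᵥ φ) := by
          rw [mulVec_sub, mulVec_sub, hT', hT, sub_self, dotProduct_zero, zero_add]
  have hflow := dotProduct_sub_nonpos_of_complementary hrp hrm hcp hcm hlo' hhi'
  have hvi' := hvi u' hu'
  rw [add_dotProduct] at hvi'
  linarith

end Dispatch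

theorem stmt3_general {n m ng nt : ℕ}
    (G : Matrix (Fin n) (Fin ng) ℝ) (C : Matrix (Fin n) (Fin m) ℝ)
    (B : Matrix (Fin m) (Fin m) ℝ) (hB : B.IsDiag)
    (T : Matrix (Fin nt) (Fin m) ℝ)
    (L : Matrix (Fin n) (Fin n) ℝ) (hL : L = C * B * Cᵀ)
    (d : Fin n → ℝ) (Psch : Fin nt → ℝ) (flo fhi : Fin m → ℝ)
    (ulo uhi : Fin ng → ℝ)
    (Ω : Set (Fin ng → ℝ)) (hΩ : Ω = {u | ulo ≤ u ∧ u ≤ uhi})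
    (J : (Fin ng → ℝ) → ℝ) (hJ : ContDiff ℝ 1 J) (hconv : ConvexOn ℝ Set.univ J)
    (gradJ : (Fin ng → ℝ) → (Fin ng → ℝ))
    (hgrad : ∀ u v : Fin ng → ℝ, fderiv ℝ J u v = gradJ u ⬝ᵥ v)
    (F : Set ((Fin ng → ℝ) × (Fin n → ℝ)))
    (hF : F = {q | q.1 ∈ Ω ∧ q.2 ⬝ᵥ (fun _ => 1) = 0 ∧
            G *ᵥ q.1 - d - L *ᵥ q.2 = 0 ∧ (T * B * Cᵀ) *ᵥ q.2 = Psch ∧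
            flo ≤ (B * Cᵀ) *ᵥ q.2 ∧ (B * Cᵀ) *ᵥ q.2 ≤ fhi})
    (hC1 : Cᵀ *ᵥ (fun _ => 1) = 0)
    (hsf : ∃ u₀ : Fin ng → ℝ, ∃ φ₀ : Fin n → ℝ,
            (∀ i, ulo i < u₀ i ∧ u₀ i < uhi i) ∧
            φ₀ ⬝ᵥ (fun _ => 1) = 0 ∧ G *ᵥ u₀ - d - L *ᵥ φ₀ = 0 ∧
            (T * B * Cᵀ) *ᵥ φ₀ = Psch ∧
            (∀ j, flo j < ((B * Cᵀ) *ᵥ φ₀) j ∧ ((B * Cᵀ) *ᵥ φ₀) j < fhi j))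
    (ustar : Fin ng → ℝ) (φstar : Fin n → ℝ) :
    ((ustar, φstar) ∈ F ∧ ∀ q ∈ F, J ustar ≤ J q.1) ↔
    ((ustar, φstar) ∈ F ∧ ∃ lam : Fin n → ℝ, ∃ piv : Fin nt → ℝ, ∃ rp rm : Fin m → ℝ,
      0 ≤ rp ∧ 0 ≤ rm ∧
      rp ⬝ᵥ ((B * Cᵀ) *ᵥ φstar - fhi) = 0 ∧
      rm ⬝ᵥ (flo - (B * Cᵀ) *ᵥ φstar) = 0 ∧
      (∀ z ∈ Ω, 0 ≤ (gradJ ustar + Gᵀ *ᵥ lam) ⬝ᵥ (z - ustar)) ∧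
      -(L *ᵥ lam) + (C * B * Tᵀ) *ᵥ piv + (C * B) *ᵥ (rp - rm) = 0) := by
  subst hΩ
  change F = dispatchFeasible G C B T L d Psch flo fhi ulo uhi at hF
  subst hF
  have hfd : HasFDerivAt (J ∘ Prod.fst) ((fderiv ℝ J ustar).comp (ContinuousLinearMap.fst ℝ _ _))
      (ustar, φstar) :=
    (hJ.differentiable one_ne_zero ustar).hasFDerivAt.comp _ hasFDerivAt_fst
  have hJF := (hconv.comp_linearMap (LinearMap.fst ℝ _ (Fin n → ℝ))).subset (Set.subset_univ _)
    (convex_dispatchFeasible G C B T L d Psch flo fhi ulo uhi)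
  have first_order : ∀ hx : (ustar, φstar) ∈ dispatchFeasible G C B T L d Psch flo fhi ulo uhi,
      (∀ q ∈ dispatchFeasible G C B T L d Psch flo fhi ulo uhi, J ustar ≤ J q.1) ↔
        ∀ q ∈ dispatchFeasible G C B T L d Psch flo fhi ulo uhi,
          0 ≤ gradJ ustar ⬝ᵥ (q.1 - ustar) := fun hx => by
    simpa [isMinOn_iff, hgrad] using hJF.isMinOn_iff_forall_fderiv_nonneg hx hfd
  constructor
  · rintro ⟨hx, hmin⟩
    exact ⟨hx, exists_dispatch_kkt_multipliers G C B T L d Psch flo fhi ulo uhi hB.isSymm hL hC1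
      hsf _ hx ((first_order hx).1 hmin)⟩
  · rintro ⟨hx, lam, piv, rp, rm, hrp, hrm, hcp, hcm, hvi, hst⟩
    exact ⟨hx, (first_order hx).2 (dotProduct_sub_nonneg_of_dispatch_kkt G C B T L d Psch flo fhi
      ulo uhi hB.isSymm hL hx hrp hrm hcp hcm hvi hst)⟩

theorem stmt3 {n m ng nt : ℕ} (hn : 0 < n) (hm : 0 < m) (hng : 0 < ng) (hnt : 0 < nt)
    (G : Matrix (Fin n) (Fin ng) ℝ) (C : Matrix (Fin n) (Fin m) ℝ)
    (B : Matrix (Fin m) (Fin m) ℝ) (hB : B.IsDiag)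
    (T : Matrix (Fin nt) (Fin m) ℝ)
    (L : Matrix (Fin n) (Fin n) ℝ) (hL : L = C * B * Cᵀ)
    (d : Fin n → ℝ) (Psch : Fin nt → ℝ) (flo fhi : Fin m → ℝ)
    (ulo uhi : Fin ng → ℝ) (hbox : ulo ≤ uhi)
    (Ω : Set (Fin ng → ℝ)) (hΩ : Ω = {u | ulo ≤ u ∧ u ≤ uhi})
    (J : (Fin ng → ℝ) → ℝ) (hJ : ContDiff ℝ 1 J) (hconv : ConvexOn ℝ Set.univ J)
    (gradJ : (Fin ng → ℝ) → (Fin ng → ℝ))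
    (hgrad : ∀ u v : Fin ng → ℝ, fderiv ℝ J u v = gradJ u ⬝ᵥ v)
    (F : Set ((Fin ng → ℝ) × (Fin n → ℝ)))
    (hF : F = {q | q.1 ∈ Ω ∧ q.2 ⬝ᵥ (fun _ => 1) = 0 ∧
            G *ᵥ q.1 - d - L *ᵥ q.2 = 0 ∧ (T * B * Cᵀ) *ᵥ q.2 = Psch ∧
            flo ≤ (B * Cᵀ) *ᵥ q.2 ∧ (B * Cᵀ) *ᵥ q.2 ≤ fhi})
    (hC1 : Cᵀ *ᵥ (fun _ => 1) = 0)
    (hsf : ∃ u₀ : Fin ng → ℝ, ∃ φ₀ : Fin n → ℝ,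
            (∀ i, ulo i < u₀ i ∧ u₀ i < uhi i) ∧
            φ₀ ⬝ᵥ (fun _ => 1) = 0 ∧ G *ᵥ u₀ - d - L *ᵥ φ₀ = 0 ∧
            (T * B * Cᵀ) *ᵥ φ₀ = Psch ∧
            (∀ j, flo j < ((B * Cᵀ) *ᵥ φ₀) j ∧ ((B * Cᵀ) *ᵥ φ₀) j < fhi j))
    (ustar : Fin ng → ℝ) (φstar : Fin n → ℝ) :
    ((ustar, φstar) ∈ F ∧ ∀ q ∈ F, J ustar ≤ J q.1) ↔
    ((ustar, φstar) ∈ F ∧ ∃ lam : Fin n → ℝ, ∃ piv : Fin nt → ℝ, ∃ rp rm : Fin m → ℝ,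
      0 ≤ rp ∧ 0 ≤ rm ∧
      rp ⬝ᵥ ((B * Cᵀ) *ᵥ φstar - fhi) = 0 ∧
      rm ⬝ᵥ (flo - (B * Cᵀ) *ᵥ φstar) = 0 ∧
      (∀ z ∈ Ω, 0 ≤ (gradJ ustar + Gᵀ *ᵥ lam) ⬝ᵥ (z - ustar)) ∧
      -(L *ᵥ lam) + (C * B * Tᵀ) *ᵥ piv + (C * B) *ᵥ (rp - rm) = 0) :=
  stmt3_general G C B hB T L hL d Psch flo fhi ulo uhi Ω hΩ J hJ hconv gradJ hgrad F hF hC1 hsf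
    ustar φstar
end

section
/- Assume J is m_J-strongly monotone in the gradient on Ω for some m_J > 0, i.e., ⟨∇J(u) − ∇J(v), u − v⟩ ≥ m_J·‖u − v‖² for all u, v ∈ Ω, and assume that every φ ∈ ℝⁿ with ⟨φ, 𝟙_n⟩ = 0 and L·φ = 0 satisfies φ = 0. If (u₁, φ₁) ∈ F and (u₂, φ₂) ∈ F both minimize J over the feasible set F, then u₁ = u₂ and φ₁ = φ₂. -/
open Matrix

/-!
The feasible set is convex, so at each minimizer the first-order condition
`⟨∇J(uᵢ), u - uᵢ⟩ ≥ 0` holds for every feasible `u`. Adding the two conditions gives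
`⟨∇J(u₁) - ∇J(u₂), u₁ - u₂⟩ ≤ 0`, and strong monotonicity forces `u₁ = u₂`. The power-flow
equation then gives `L (φ₁ - φ₂) = 0` with `⟨φ₁ - φ₂, 𝟙⟩ = 0`, so `φ₁ = φ₂` by the kernel
assumption.
-/

theorem IsMinOn.hasFDerivWithinAt_apply_sub_nonneg {E : Type*} [NormedAddCommGroup E]
    [NormedSpace ℝ E] {f : E → ℝ} {f' : StrongDual ℝ E} {s : Set E} {x y : E}
    (hs : Convex ℝ s) (hx : x ∈ s) (hy : y ∈ s) (hmin : IsMinOn f s x)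
    (hf : HasFDerivWithinAt f f' s x) : 0 ≤ f' (y - x) :=
  hmin.localize.hasFDerivWithinAt_nonneg hf
    (sub_mem_posTangentConeAt_of_segment_subset (hs.segment_subset hx hy))

theorem IsMinOn.hasFDerivWithinAt_sub_apply_sub_nonpos {E : Type*} [NormedAddCommGroup E]
    [NormedSpace ℝ E] {f : E → ℝ} {f' g' : StrongDual ℝ E} {s : Set E} {x y : E}
    (hs : Convex ℝ s) (hx : x ∈ s) (hy : y ∈ s) (hminx : IsMinOn f s x) (hminy : IsMinOn f s y)
    (hfx : HasFDerivWithinAt f f' s x) (hfy : HasFDerivWithinAt f g' s y) :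
    (f' - g') (x - y) ≤ 0 := by
  have h₁ := hminx.hasFDerivWithinAt_apply_sub_nonneg hs hx hy hfx
  have h₂ := hminy.hasFDerivWithinAt_apply_sub_nonneg hs hy hx hfy
  rw [← neg_sub, map_neg] at h₁
  rw [_root_.sub_apply]
  linarith

theorem convex_dispatch_feasible {ι γ β τ : Type*} [Fintype ι] [Fintype γ] [Fintype β]
    (G : Matrix ι γ ℝ) (L : Matrix ι ι ℝ) (K : Matrix β ι ℝ) (TK : Matrix τ ι ℝ)
    (d : ι → ℝ) (Psch : τ → ℝ) (flo fhi : β → ℝ) {Ω : Set (γ → ℝ)} (hΩ : Convex ℝ Ω) :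
    Convex ℝ {q : (γ → ℝ) × (ι → ℝ) | q.1 ∈ Ω ∧ q.2 ⬝ᵥ (fun _ => 1) = 0 ∧
      G *ᵥ q.1 - d - L *ᵥ q.2 = 0 ∧ TK *ᵥ q.2 = Psch ∧ flo ≤ K *ᵥ q.2 ∧ K *ᵥ q.2 ≤ fhi} := by
  rintro ⟨u, φ⟩ ⟨hu, hφ, hG, hT, hlo, hhi⟩ ⟨v, ψ⟩ ⟨hv, hψ, hG', hT', hlo', hhi'⟩ a b ha hb hab
  simp only [Prod.smul_mk, Prod.mk_add_mk, Set.mem_ofPred_eq, mulVec_add, mulVec_smul,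
    add_dotProduct, smul_dotProduct]
  have hK : a • K *ᵥ φ + b • K *ᵥ ψ ∈ Set.Icc flo fhi :=
    convex_Icc flo fhi ⟨hlo, hhi⟩ ⟨hlo', hhi'⟩ ha hb hab
  refine ⟨hΩ hu hv ha hb hab, ?_, ?_, ?_, hK.1, hK.2⟩
  · simp [hφ, hψ]
  · linear_combination (norm := module) a • hG + b • hG' + hab • d
  · rw [hT, hT', ← add_smul, hab, one_smul]

theorem eq_of_pos_mul_dotProduct_self_sub_nonpos {ι : Type*} [Fintype ι] {m : ℝ} (hm : 0 < m)
    {x y : ι → ℝ} (h : m * ((x - y) ⬝ᵥ (x - y)) ≤ 0) : x = y := by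
  have hnonneg : 0 ≤ (x - y) ⬝ᵥ (x - y) := dotProduct_self_star_nonneg (x - y)
  have hzero : (x - y) ⬝ᵥ (x - y) = 0 :=
    le_antisymm (nonpos_of_mul_nonpos_right h hm) hnonneg
  exact sub_eq_zero.1 (dotProduct_self_eq_zero.1 hzero)

theorem stmt4_general {n m ng nt : ℕ}
    (G : Matrix (Fin n) (Fin ng) ℝ) (C : Matrix (Fin n) (Fin m) ℝ)
    (B : Matrix (Fin m) (Fin m) ℝ)
    (T : Matrix (Fin nt) (Fin m) ℝ)
    (L : Matrix (Fin n) (Fin n) ℝ)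
    (d : Fin n → ℝ) (Psch : Fin nt → ℝ) (flo fhi : Fin m → ℝ)
    (ulo uhi : Fin ng → ℝ)
    (Ω : Set (Fin ng → ℝ)) (hΩ : Ω = {u | ulo ≤ u ∧ u ≤ uhi})
    (J : (Fin ng → ℝ) → ℝ) (hJ : ContDiff ℝ 1 J)
    (gradJ : (Fin ng → ℝ) → (Fin ng → ℝ))
    (hgrad : ∀ u v : Fin ng → ℝ, fderiv ℝ J u v = gradJ u ⬝ᵥ v)
    (F : Set ((Fin ng → ℝ) × (Fin n → ℝ)))
    (hF : F = {q | q.1 ∈ Ω ∧ q.2 ⬝ᵥ (fun _ => 1) = 0 ∧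
            G *ᵥ q.1 - d - L *ᵥ q.2 = 0 ∧ (T * B * Cᵀ) *ᵥ q.2 = Psch ∧
            flo ≤ (B * Cᵀ) *ᵥ q.2 ∧ (B * Cᵀ) *ᵥ q.2 ≤ fhi})
    (mJ : ℝ) (hmJ : 0 < mJ)
    (hsm : ∀ u ∈ Ω, ∀ v ∈ Ω, mJ * ((u - v) ⬝ᵥ (u - v)) ≤ (gradJ u - gradJ v) ⬝ᵥ (u - v))
    (hker : ∀ φ : Fin n → ℝ, φ ⬝ᵥ (fun _ => 1) = 0 → L *ᵥ φ = 0 → φ = 0)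
    (u₁ u₂ : Fin ng → ℝ) (φ₁ φ₂ : Fin n → ℝ)
    (h₁ : (u₁, φ₁) ∈ F ∧ ∀ q ∈ F, J u₁ ≤ J q.1)
    (h₂ : (u₂, φ₂) ∈ F ∧ ∀ q ∈ F, J u₂ ≤ J q.1) :
    u₁ = u₂ ∧ φ₁ = φ₂ := by
  have hFconv : Convex ℝ F :=
    hF ▸ convex_dispatch_feasible G L (B * Cᵀ) (T * B * Cᵀ) d Psch flo fhi (hΩ ▸ convex_Icc ulo uhi)
  have hderiv (u : Fin ng → ℝ) (φ : Fin n → ℝ) :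
      HasFDerivWithinAt (fun q : (Fin ng → ℝ) × (Fin n → ℝ) => J q.1)
        ((fderiv ℝ J u).comp (ContinuousLinearMap.fst ℝ _ _)) F (u, φ) :=
    ((hJ.differentiable one_ne_zero u).hasFDerivAt.comp _ hasFDerivAt_fst).hasFDerivWithinAt
  have hgrad_le : (gradJ u₁ - gradJ u₂) ⬝ᵥ (u₁ - u₂) ≤ 0 := by
    simpa only [_root_.sub_apply, ContinuousLinearMap.comp_apply, ContinuousLinearMap.coe_fst',
      Prod.mk_sub_mk, hgrad, ← sub_dotProduct] using
      IsMinOn.hasFDerivWithinAt_sub_apply_sub_nonpos hFconv h₁.1 h₂.1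
        (isMinOn_iff.2 h₁.2) (isMinOn_iff.2 h₂.2) (hderiv u₁ φ₁) (hderiv u₂ φ₂)
  obtain ⟨hu₁, hφ₁, hG₁, -⟩ := hF ▸ h₁.1
  obtain ⟨hu₂, hφ₂, hG₂, -⟩ := hF ▸ h₂.1
  obtain rfl : u₁ = u₂ :=
    eq_of_pos_mul_dotProduct_self_sub_nonpos hmJ ((hsm u₁ hu₁ u₂ hu₂).trans hgrad_le)
  refine ⟨rfl, sub_eq_zero.1 (hker _ ?_ ?_)⟩
  · rw [sub_dotProduct, hφ₁, hφ₂, sub_zero]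
  · rw [mulVec_sub]
    linear_combination (norm := module) hG₂ - hG₁

theorem stmt4 {n m ng nt : ℕ} (hn : 0 < n) (hm : 0 < m) (hng : 0 < ng) (hnt : 0 < nt)
    (G : Matrix (Fin n) (Fin ng) ℝ) (C : Matrix (Fin n) (Fin m) ℝ)
    (B : Matrix (Fin m) (Fin m) ℝ) (hB : B.IsDiag)
    (T : Matrix (Fin nt) (Fin m) ℝ)
    (L : Matrix (Fin n) (Fin n) ℝ) (hL : L = C * B * Cᵀ)
    (d : Fin n → ℝ) (Psch : Fin nt → ℝ) (flo fhi : Fin m → ℝ)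
    (ulo uhi : Fin ng → ℝ) (hbox : ulo ≤ uhi)
    (Ω : Set (Fin ng → ℝ)) (hΩ : Ω = {u | ulo ≤ u ∧ u ≤ uhi})
    (J : (Fin ng → ℝ) → ℝ) (hJ : ContDiff ℝ 1 J) (hconv : ConvexOn ℝ Set.univ J)
    (gradJ : (Fin ng → ℝ) → (Fin ng → ℝ))
    (hgrad : ∀ u v : Fin ng → ℝ, fderiv ℝ J u v = gradJ u ⬝ᵥ v)
    (F : Set ((Fin ng → ℝ) × (Fin n → ℝ)))
    (hF : F = {q | q.1 ∈ Ω ∧ q.2 ⬝ᵥ (fun _ => 1) = 0 ∧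
            G *ᵥ q.1 - d - L *ᵥ q.2 = 0 ∧ (T * B * Cᵀ) *ᵥ q.2 = Psch ∧
            flo ≤ (B * Cᵀ) *ᵥ q.2 ∧ (B * Cᵀ) *ᵥ q.2 ≤ fhi})
    (mJ : ℝ) (hmJ : 0 < mJ)
    (hsm : ∀ u ∈ Ω, ∀ v ∈ Ω, mJ * ((u - v) ⬝ᵥ (u - v)) ≤ (gradJ u - gradJ v) ⬝ᵥ (u - v))
    (hker : ∀ φ : Fin n → ℝ, φ ⬝ᵥ (fun _ => 1) = 0 → L *ᵥ φ = 0 → φ = 0)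
    (u₁ u₂ : Fin ng → ℝ) (φ₁ φ₂ : Fin n → ℝ)
    (h₁ : (u₁, φ₁) ∈ F ∧ ∀ q ∈ F, J u₁ ≤ J q.1)
    (h₂ : (u₂, φ₂) ∈ F ∧ ∀ q ∈ F, J u₂ ≤ J q.1) :
    u₁ = u₂ ∧ φ₁ = φ₂ :=
  stmt4_general G C B T L d Psch flo fhi ulo uhi Ω hΩ J hJ gradJ hgrad F hF mJ hmJ hsm hker u₁ u₂ φ₁
    φ₂ h₁ h₂
end

section
/- Let (u*, φ*, λ*, π*, ρ⁺*, ρ⁻*) satisfy: u* ∈ Ω; ⟨φ*, 𝟙_n⟩ = 0; ρ⁺* ≥ 0 and ρ⁻* ≥ 0 componentwise; G·u* − d − L·φ* = 0; T·B·Cᵀ·φ* = P^sch; the Euclidean projection of −∇J(u*) − Gᵀ·λ* onto the tangent cone T_Ω(u*) is 0; the Euclidean projection of B·Cᵀ·φ* − f_hi onto the tangent cone T_{[0,∞)^m}(ρ⁺*) is 0; the Euclidean projection of f_lo − B·Cᵀ·φ* onto the tangent cone T_{[0,∞)^m}(ρ⁻*) is 0; and −L·λ* + C·B·Tᵀ·π*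 + C·B·(ρ⁺* − ρ⁻*) = 0. Then (u*, φ*) ∈ F and J(u*) ≤ J(u) for every (u, φ) ∈ F, i.e., (u*, φ*) is an optimal solution of the dispatch problem. -/
/-!
Feasibility of `(u*, φ*)` is read off the two orthant projections: a zero projection of `y` onto
the tangent cone of `[0, ∞)^m` at `ρ ≥ 0` means `y ≤ 0` and `⟨y, ρ⟩ = 0`, which are the flow
limits together with complementary slackness. For optimality, a zero projection of `-∇J(u*) - Gᵀλ`
onto `T_Ω(u*)` gives `⟨∇J(u*) + Gᵀλ, u - u*⟩ ≥ 0` for every `u ∈ Ω`. For a feasible `(u, φ)`,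
stationarity in `φ`, symmetry of `L = C B Cᵀ` and the two linear constraints turn
`⟨Gᵀλ, u - u*⟩` into `⟨ρ⁺ - ρ⁻, w - w*⟩` with `w = B Cᵀ φ`, which is `≤ 0` by complementary
slackness. Hence `⟨∇J(u*), u - u*⟩ ≥ 0`, and the gradient inequality of the convex `J` finishes.
-/

open Matrix

open Filter Topology

lemma eNorm_le_eNorm_iff {k : ℕ} {x y : Fin k → ℝ} : eNorm x ≤ eNorm y ↔ x ⬝ᵥ x ≤ y ⬝ᵥ y :=
  Real.sqrt_le_sqrt_iff (dotProduct_self_star_nonneg y)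

lemma smul_sub_mem_tangentConeOf {k : ℕ} {S : Set (Fin k → ℝ)} {x z : Fin k → ℝ} (hz : z ∈ S)
    {t : ℝ} (ht : 0 ≤ t) : t • (z - x) ∈ tangentConeOf S x :=
  subset_closure ⟨t, ht, z, hz, rfl⟩

namespace IsEuclideanProj

variable {k : ℕ}

lemma dotProduct_nonpos_of_ray {K : Set (Fin k → ℝ)} {y v : Fin k → ℝ}
    (h : IsEuclideanProj K y 0) (hv : ∀ t : ℝ, 0 < t → t • v ∈ K) : y ⬝ᵥ v ≤ 0 := by
  have hsmall : ∀ t : ℝ, 0 < t → 2 * (y ⬝ᵥ v) ≤ t * (v ⬝ᵥ v) := by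
    intro t ht
    have hle := eNorm_le_eNorm_iff.1 (h.2 _ (hv t ht))
    simp only [sub_zero, dotProduct_sub, sub_dotProduct, dotProduct_smul, smul_dotProduct,
      smul_eq_mul, dotProduct_comm v y] at hle
    nlinarith
  have hlim : Tendsto (fun t : ℝ => t * (v ⬝ᵥ v)) (𝓝[>] 0) (𝓝 (0 * (v ⬝ᵥ v))) :=
    ((continuous_id.mul continuous_const).tendsto 0).mono_left nhdsWithin_le_nhds
  have := ge_of_tendsto hlim (eventually_nhdsWithin_of_forall hsmall)
  linarith

lemma dotProduct_sub_nonpos_s5 {S : Set (Fin k → ℝ)} {x y z : Fin k → ℝ}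
    (h : IsEuclideanProj (tangentConeOf S x) y 0) (hz : z ∈ S) : y ⬝ᵥ (z - x) ≤ 0 :=
  h.dotProduct_nonpos_of_ray fun _ ht => smul_sub_mem_tangentConeOf hz ht.le

lemma nonpos_of_orthant {r y : Fin k → ℝ} (hr : 0 ≤ r)
    (h : IsEuclideanProj (tangentConeOf {s : Fin k → ℝ | 0 ≤ s} r) y 0) : y ≤ 0 := by
  intro i
  have := h.dotProduct_sub_nonpos_s5 (z := r + Pi.single i 1)
    (add_nonneg hr (Pi.single_nonneg.2 zero_le_one))
  simpa [dotProduct_single] using this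

lemma dotProduct_eq_zero_of_orthant {r y : Fin k → ℝ} (hr : 0 ≤ r)
    (h : IsEuclideanProj (tangentConeOf {s : Fin k → ℝ | 0 ≤ s} r) y 0) : y ⬝ᵥ r = 0 := by
  have h0 := h.dotProduct_sub_nonpos_s5 (z := 0) (le_refl (0 : Fin k → ℝ))
  have h2 := h.dotProduct_sub_nonpos_s5 (z := 2 • r) (nsmul_nonneg hr 2)
  rw [two_nsmul, add_sub_cancel_right] at h2
  rw [zero_sub, dotProduct_neg] at h0
  linarith

end IsEuclideanProj

lemma dotProduct_le_of_complementary {k : ℕ} {ρ w w' f : Fin k → ℝ} (hρ : 0 ≤ ρ) (hw : w ≤ f)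
    (hc : (w' - f) ⬝ᵥ ρ = 0) : ρ ⬝ᵥ w ≤ ρ ⬝ᵥ w' := by
  have hf : ρ ⬝ᵥ w' = ρ ⬝ᵥ f := by
    rwa [sub_dotProduct, sub_eq_zero, dotProduct_comm, dotProduct_comm f] at hc
  exact hf ▸ dotProduct_le_dotProduct_of_nonneg_left hw hρ

lemma ConvexOn.add_fderiv_sub_le {E : Type*} [NormedAddCommGroup E] [NormedSpace ℝ E]
    {f : E → ℝ} (hf : ConvexOn ℝ Set.univ f) {x : E} (hx : DifferentiableAt ℝ f x) (y : E) :
    f x + fderiv ℝ f x (y - x) ≤ f y := by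
  set ℓ : ℝ →ᵃ[ℝ] E := AffineMap.lineMap x y
  have hconv : ConvexOn ℝ Set.univ (f ∘ ℓ) := hf.comp_affineMap ℓ
  have hderiv : HasDerivAt (f ∘ ℓ) (fderiv ℝ f x (y - x)) 0 := by
    have hx' : HasFDerivAt f (fderiv ℝ f x) (ℓ 0) := by
      rw [AffineMap.lineMap_apply_zero]; exact hx.hasFDerivAt
    exact hx'.comp_hasDerivAt 0 AffineMap.hasDerivAt_lineMap
  have := hconv.le_slope_of_hasDerivAt (Set.mem_univ 0) (Set.mem_univ 1) zero_lt_one hderiv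
  rw [slope_def_field, sub_zero, div_one, Function.comp_apply, Function.comp_apply,
    AffineMap.lineMap_apply_one, AffineMap.lineMap_apply_zero] at this
  linarith

lemma transpose_mulVec_dotProduct_eq_of_stationary {R ι κ μ ν : Type*} [CommRing R]
    [Fintype ι] [Fintype κ] [Fintype μ] [Fintype ν]
    {G : Matrix ι κ R} {C : Matrix ι μ R} {B : Matrix μ μ R} (hB : B.IsDiag)
    {T : Matrix ν μ R} {lam : ι → R} {piv : ν → R} {ρ : μ → R}
    (hstat : -((C * B * Cᵀ) *ᵥ lam) + (C * B * Tᵀ) *ᵥ piv + (C * B) *ᵥ ρ = 0)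
    {δu : κ → R} {δφ : ι → R}
    (hbal : G *ᵥ δu = (C * B * Cᵀ) *ᵥ δφ) (htie : (T * B * Cᵀ) *ᵥ δφ = 0) :
    (Gᵀ *ᵥ lam) ⬝ᵥ δu = ρ ⬝ᵥ ((B * Cᵀ) *ᵥ δφ) := by
  have hBt : Bᵀ = B := hB.isSymm
  have hL : (C * B * Cᵀ) *ᵥ lam = (C * B * Tᵀ) *ᵥ piv + (C * B) *ᵥ ρ := by
    rwa [add_assoc, neg_add_eq_zero] at hstat
  have hLt : (C * B * Cᵀ)ᵀ = C * B * Cᵀ := by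
    rw [transpose_mul, transpose_mul, transpose_transpose, hBt, Matrix.mul_assoc]
  calc (Gᵀ *ᵥ lam) ⬝ᵥ δu = δφ ⬝ᵥ (C * B * Cᵀ) *ᵥ lam := by
        rw [dotProduct_comm, dotProduct_transpose_mulVec, hbal, ← hLt,
          dotProduct_transpose_mulVec, hLt]
    _ = piv ⬝ᵥ (C * B * Tᵀ)ᵀ *ᵥ δφ + ρ ⬝ᵥ (C * B)ᵀ *ᵥ δφ := by
        rw [hL, dotProduct_add, dotProduct_transpose_mulVec, dotProduct_transpose_mulVec]
    _ = ρ ⬝ᵥ (B * Cᵀ) *ᵥ δφ := by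
        rw [transpose_mul, transpose_mul, transpose_transpose, hBt, ← Matrix.mul_assoc, htie,
          dotProduct_zero, zero_add]

theorem stmt5_general {n m ng nt : ℕ}
    (G : Matrix (Fin n) (Fin ng) ℝ) (C : Matrix (Fin n) (Fin m) ℝ)
    (B : Matrix (Fin m) (Fin m) ℝ) (hB : B.IsDiag)
    (T : Matrix (Fin nt) (Fin m) ℝ)
    (L : Matrix (Fin n) (Fin n) ℝ) (hL : L = C * B * Cᵀ)
    (d : Fin n → ℝ) (Psch : Fin nt → ℝ) (flo fhi : Fin m → ℝ)
    (Ω : Set (Fin ng → ℝ))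
    (J : (Fin ng → ℝ) → ℝ) (hJ : ContDiff ℝ 1 J) (hconv : ConvexOn ℝ Set.univ J)
    (gradJ : (Fin ng → ℝ) → (Fin ng → ℝ))
    (hgrad : ∀ u v : Fin ng → ℝ, fderiv ℝ J u v = gradJ u ⬝ᵥ v)
    (F : Set ((Fin ng → ℝ) × (Fin n → ℝ)))
    (hF : F = {q | q.1 ∈ Ω ∧ q.2 ⬝ᵥ (fun _ => 1) = 0 ∧
            G *ᵥ q.1 - d - L *ᵥ q.2 = 0 ∧ (T * B * Cᵀ) *ᵥ q.2 = Psch ∧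
            flo ≤ (B * Cᵀ) *ᵥ q.2 ∧ (B * Cᵀ) *ᵥ q.2 ≤ fhi})
    (ustar : Fin ng → ℝ) (φstar lam : Fin n → ℝ) (piv : Fin nt → ℝ) (rp rm : Fin m → ℝ)
    (hustar : ustar ∈ Ω)
    (hφstar : φstar ⬝ᵥ (fun _ => 1) = 0)
    (hrp : 0 ≤ rp) (hrm : 0 ≤ rm)
    (hbal : G *ᵥ ustar - d - L *ᵥ φstar = 0)
    (htie : (T * B * Cᵀ) *ᵥ φstar = Psch)
    (hproju : IsEuclideanProj (tangentConeOf Ω ustar) (-(gradJ ustar) - Gᵀ *ᵥ lam) 0)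
    (hprojp : IsEuclideanProj (tangentConeOf {s : Fin m → ℝ | 0 ≤ s} rp)
        ((B * Cᵀ) *ᵥ φstar - fhi) 0)
    (hprojm : IsEuclideanProj (tangentConeOf {s : Fin m → ℝ | 0 ≤ s} rm)
        (flo - (B * Cᵀ) *ᵥ φstar) 0)
    (hstat : -(L *ᵥ lam) + (C * B * Tᵀ) *ᵥ piv + (C * B) *ᵥ (rp - rm) = 0) :
    (ustar, φstar) ∈ F ∧ ∀ q ∈ F, J ustar ≤ J q.1 := by
  subst hL hF
  refine ⟨⟨hustar, hφstar, hbal, htie, sub_nonpos.1 (hprojm.nonpos_of_orthant hrm),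
    sub_nonpos.1 (hprojp.nonpos_of_orthant hrp)⟩, ?_⟩
  rintro ⟨u, φ⟩ ⟨hu, -, hbal', htie', hlo, hhi⟩
  have hlin := transpose_mulVec_dotProduct_eq_of_stationary (G := G) hB hstat
    (δu := u - ustar) (δφ := φ - φstar)
    (by rw [mulVec_sub, mulVec_sub]; linear_combination hbal' - hbal)
    (by rw [mulVec_sub, htie, htie', sub_self])
  have hvar := hproju.dotProduct_sub_nonpos_s5 hu
  have hup := dotProduct_le_of_complementary hrp hhi (hprojp.dotProduct_eq_zero_of_orthant hrp)
  have hlow := dotProduct_le_of_complementary hrm (neg_le_neg hlo)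
    (by rw [neg_sub_neg]; exact hprojm.dotProduct_eq_zero_of_orthant hrm)
  have hgradIneq := hconv.add_fderiv_sub_le (hJ.differentiable one_ne_zero ustar) u
  rw [hgrad] at hgradIneq
  simp only [mulVec_sub, dotProduct_sub, sub_dotProduct, neg_dotProduct, dotProduct_neg]
    at hlin hvar hup hlow hgradIneq ⊢
  linarith

theorem stmt5 {n m ng nt : ℕ} (hn : 0 < n) (hm : 0 < m) (hng : 0 < ng) (hnt : 0 < nt)
    (G : Matrix (Fin n) (Fin ng) ℝ) (C : Matrix (Fin n) (Fin m) ℝ)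
    (B : Matrix (Fin m) (Fin m) ℝ) (hB : B.IsDiag)
    (T : Matrix (Fin nt) (Fin m) ℝ)
    (L : Matrix (Fin n) (Fin n) ℝ) (hL : L = C * B * Cᵀ)
    (d : Fin n → ℝ) (Psch : Fin nt → ℝ) (flo fhi : Fin m → ℝ)
    (ulo uhi : Fin ng → ℝ) (hbox : ulo ≤ uhi)
    (Ω : Set (Fin ng → ℝ)) (hΩ : Ω = {u | ulo ≤ u ∧ u ≤ uhi})
    (J : (Fin ng → ℝ) → ℝ) (hJ : ContDiff ℝ 1 J) (hconv : ConvexOn ℝ Set.univ J)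
    (gradJ : (Fin ng → ℝ) → (Fin ng → ℝ))
    (hgrad : ∀ u v : Fin ng → ℝ, fderiv ℝ J u v = gradJ u ⬝ᵥ v)
    (F : Set ((Fin ng → ℝ) × (Fin n → ℝ)))
    (hF : F = {q | q.1 ∈ Ω ∧ q.2 ⬝ᵥ (fun _ => 1) = 0 ∧
            G *ᵥ q.1 - d - L *ᵥ q.2 = 0 ∧ (T * B * Cᵀ) *ᵥ q.2 = Psch ∧
            flo ≤ (B * Cᵀ) *ᵥ q.2 ∧ (B * Cᵀ) *ᵥ q.2 ≤ fhi})
    (ustar : Fin ng → ℝ) (φstar lam : Fin n → ℝ) (piv : Fin nt → ℝ) (rp rm : Fin m → ℝ)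
    (hustar : ustar ∈ Ω)
    (hφstar : φstar ⬝ᵥ (fun _ => 1) = 0)
    (hrp : 0 ≤ rp) (hrm : 0 ≤ rm)
    (hbal : G *ᵥ ustar - d - L *ᵥ φstar = 0)
    (htie : (T * B * Cᵀ) *ᵥ φstar = Psch)
    (hproju : IsEuclideanProj (tangentConeOf Ω ustar) (-(gradJ ustar) - Gᵀ *ᵥ lam) 0)
    (hprojp : IsEuclideanProj (tangentConeOf {s : Fin m → ℝ | 0 ≤ s} rp)
        ((B * Cᵀ) *ᵥ φstar - fhi) 0)
    (hprojm : IsEuclideanProj (tangentConeOf {s : Fin m → ℝ | 0 ≤ s} rm)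
        (flo - (B * Cᵀ) *ᵥ φstar) 0)
    (hstat : -(L *ᵥ lam) + (C * B * Tᵀ) *ᵥ piv + (C * B) *ᵥ (rp - rm) = 0) :
    (ustar, φstar) ∈ F ∧ ∀ q ∈ F, J ustar ≤ J q.1 :=
  stmt5_general G C B hB T L hL d Psch flo fhi Ω J hJ hconv gradJ hgrad F hF ustar φstar lam piv rp
    rm hustar hφstar hrp hrm hbal htie hproju hprojp hprojm hstat
end

section
/- Let η > 0 and d_u, d_ω > 0. Let ũ, ỹ, p̃, w̃ : ℝ → ℝ^{n_g} be continuous functions, define the incremental wave variables σ̃_p^±(t) := (p̃(t) ∓ η·w̃(t))/√(2η) and σ̃_o^±(t) := (ũ(t) ± η·ỹ(t))/√(2η), and assume the delay relations σ̃_p^−(t) = σ̃_o^+(t − d_u) and σ̃_o^−(t) = σ̃_p^+(t − d_ω) hold for all t. Define the delay-line storage S_τ(t) := (1/2)·∫_{t−d_u}^{t} ‖σ̃_o^+(s)‖² ds + (1/2)·∫_{t−d_ω}^{t} ‖σ̃_p^+(s)‖² ds. Then S_τ is differentiable and, for all t, S_τ'(t) = −⟨w̃(t), p̃(t)⟩ +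 ⟨ũ(t), ỹ(t)⟩. -/
/-!
Each delay line stores the energy of the wave travelling through it, so its storage changes at the
rate "wave entering minus wave leaving". By the delay relations the leaving waves are exactly the
reflected waves σ_p⁻ and σ_o⁻ at the ports, and at each port the difference of the squared
incoming and outgoing waves is twice the port power: ‖σ⁺‖² − ‖σ⁻‖² = 2⟨u, y⟩ and
‖σ_p⁻‖² − ‖σ_p⁺‖² = 2⟨p, w⟩.
-/

open Matrix intervalIntegral

theorem hasDerivAt_integral_sub_const_self {E : Type*} [NormedAddCommGroup E] [NormedSpace ℝ E]
    [CompleteSpace E] {f : ℝ → E} (hf : Continuous f) (d t : ℝ) :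
    HasDerivAt (fun t => ∫ s in (t - d)..t, f s) (f t - f (t - d)) t := by
  have hF (x : ℝ) : HasDerivAt (fun x => ∫ s in (0 : ℝ)..x, f s) (f x) x :=
    (hf.integral_hasStrictDerivAt 0 x).hasDerivAt
  have hsplit (x : ℝ) :
      ∫ s in (x - d)..x, f s = (∫ s in (0 : ℝ)..x, f s) - ∫ s in (0 : ℝ)..(x - d), f s :=
    (integral_interval_sub_left (hf.intervalIntegrable _ _) (hf.intervalIntegrable _ _)).symm
  simp only [hsplit]
  exact (hF t).fun_sub ((hF (t - d)).comp_sub_const t d)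

theorem smul_add_dotProduct_sub_smul_sub_dotProduct {ι R : Type*} [Fintype ι] [CommRing R]
    (c η : R) (a b : ι → R) :
    (c • (a + η • b)) ⬝ᵥ (c • (a + η • b)) - (c • (a - η • b)) ⬝ᵥ (c • (a - η • b)) =
      4 * c ^ 2 * η * (a ⬝ᵥ b) := by
  simp only [smul_dotProduct, dotProduct_smul, smul_eq_mul, add_dotProduct, dotProduct_add,
    sub_dotProduct, dotProduct_sub, dotProduct_comm b a]
  ring

theorem stmt9_general {ng : ℕ} (η du dω : ℝ) (hη : 0 < η)
    (u y p w : ℝ → Fin ng → ℝ)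
    (hu : Continuous u) (hy : Continuous y) (hp : Continuous p) (hw : Continuous w)
    (σpp σpm σop σom : ℝ → Fin ng → ℝ)
    (h1 : σpp = fun t => (Real.sqrt (2 * η))⁻¹ • (p t - η • w t))
    (h2 : σpm = fun t => (Real.sqrt (2 * η))⁻¹ • (p t + η • w t))
    (h3 : σop = fun t => (Real.sqrt (2 * η))⁻¹ • (u t + η • y t))
    (h4 : σom = fun t => (Real.sqrt (2 * η))⁻¹ • (u t - η • y t))
    (hdel1 : ∀ t, σpm t = σop (t - du))
    (hdel2 : ∀ t, σom t = σpp (t - dω))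
    (Sτ : ℝ → ℝ)
    (hSτ : Sτ = fun t => (1/2) * (∫ s in (t - du)..t, σop s ⬝ᵥ σop s) +
                         (1/2) * (∫ s in (t - dω)..t, σpp s ⬝ᵥ σpp s)) :
    ∀ t, HasDerivAt Sτ (-(w t ⬝ᵥ p t) + u t ⬝ᵥ y t) t := by
  intro t
  have hσop : Continuous σop := h3 ▸ by fun_prop
  have hσpp : Continuous σpp := h1 ▸ by fun_prop
  have hderiv :=
    ((hasDerivAt_integral_sub_const_self (hσop.dotProduct hσop) du t).const_mul (1 / 2)).fun_add
      ((hasDerivAt_integral_sub_const_self (hσpp.dotProduct hσpp) dω t).const_mul (1 / 2))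
  rw [hSτ]
  refine hderiv.congr_deriv ?_
  rw [← hdel1, ← hdel2]
  have hscale : 4 * (Real.sqrt (2 * η))⁻¹ ^ 2 * η = 2 := by
    rw [inv_pow, Real.sq_sqrt (by positivity)]
    field_simp
    ring
  have hop := smul_add_dotProduct_sub_smul_sub_dotProduct (Real.sqrt (2 * η))⁻¹ η (u t) (y t)
  have hpm := smul_add_dotProduct_sub_smul_sub_dotProduct (Real.sqrt (2 * η))⁻¹ η (p t) (w t)
  rw [hscale] at hop hpm
  simp only [h1, h2, h3, h4, dotProduct_comm (w t)]
  linarith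

theorem stmt9 {ng : ℕ} (η du dω : ℝ) (hη : 0 < η) (hdu : 0 < du) (hdω : 0 < dω)
    (u y p w : ℝ → Fin ng → ℝ)
    (hu : Continuous u) (hy : Continuous y) (hp : Continuous p) (hw : Continuous w)
    (σpp σpm σop σom : ℝ → Fin ng → ℝ)
    (h1 : σpp = fun t => (Real.sqrt (2 * η))⁻¹ • (p t - η • w t))
    (h2 : σpm = fun t => (Real.sqrt (2 * η))⁻¹ • (p t + η • w t))
    (h3 : σop = fun t => (Real.sqrt (2 * η))⁻¹ • (u t + η • y t))
    (h4 : σom = fun t => (Real.sqrt (2 * η))⁻¹ • (u t - η • y t))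
    (hdel1 : ∀ t, σpm t = σop (t - du))
    (hdel2 : ∀ t, σom t = σpp (t - dω))
    (Sτ : ℝ → ℝ)
    (hSτ : Sτ = fun t => (1/2) * (∫ s in (t - du)..t, σop s ⬝ᵥ σop s) +
                         (1/2) * (∫ s in (t - dω)..t, σpp s ⬝ᵥ σpp s)) :
    ∀ t, HasDerivAt Sτ (-(w t ⬝ᵥ p t) + u t ⬝ᵥ y t) t :=
  stmt9_general η du dω hη u y p w hu hy hp hw σpp σpm σop σom h1 h2 h3 h4 hdel1 hdel2 Sτ hSτ
end

section
/- Let G be a real n×n_g matrix, C a real n×m matrix, B a real diagonal m×m matrix, T a real n_t×m matrix, and L := C·B·Cᵀ. Let τ_u, τ_φ, τ_λ, τ_π, τ_+, τ_− be diagonal positive definite matrices of appropriate sizes, let κ > 0, let J : ℝ^{n_g} → ℝ be continuously differentiable, let Ω := {u : u_lo ≤ u ≤ u_hi} be a nonempty box in ℝ^{n_g}, and fix d ∈ ℝⁿ, P^sch ∈ ℝ^{n_t}, f_lo, f_hi ∈ ℝ^m. Let (u*, φ*, λ*, π*, ρ⁺*, ρ⁻*) satisfy: u* ∈ Ω; ρ⁺*,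 ρ⁻* ≥ 0 componentwise; G·u* − d − L·φ* = 0; T·B·Cᵀ·φ* = P^sch; −L·λ* + C·B·Tᵀ·π* + C·B·(ρ⁺* − ρ⁻*) = 0; ⟨−∇J(u*) − Gᵀ·λ*, z − u*⟩ ≤ 0 for all z ∈ Ω; ⟨B·Cᵀ·φ* − f_hi, s − ρ⁺*⟩ ≤ 0 and ⟨f_lo − B·Cᵀ·φ*, s − ρ⁻*⟩ ≤ 0 for all s ∈ ℝ^m with s ≥ 0. Let u, φ, λ, π, ρ⁺, ρ⁻ be differentiable functions of t with u(t) ∈ Ω and ρ⁺(t), ρ⁻(t) ≥ 0 componentwise, and let y : ℝ → ℝ^{n_g} be continuous. Set r(t) := G·u(t) − d − L·φ(t) and ξ_u(t) := −∇J(u(t)) − Gᵀ·λ(t) − κ·Gᵀ·r(t) − y(t), and assume for all t: (a) ⟨u(t) − z, τ_u·u'(t)⟩ ≤ ⟨u(t) − z, ξ_u(t)⟩ for all z ∈ Ω; (b) τ_φ·φ'(t) = L·λ(t) − C·B·(Tᵀ·π(t) + ρ⁺(t) − ρ⁻(t)) + κ·L·r(t); (c) τ_λ·λ'(t) = r(t);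 (d) τ_π·π'(t) = T·B·Cᵀ·φ(t) − P^sch; (e) ⟨ρ⁺(t) − s, τ_+·(ρ⁺)'(t)⟩ ≤ ⟨ρ⁺(t) − s, B·Cᵀ·φ(t) − f_hi⟩ for all s ≥ 0, and ⟨ρ⁻(t) − s, τ_−·(ρ⁻)'(t)⟩ ≤ ⟨ρ⁻(t) − s, f_lo − B·Cᵀ·φ(t)⟩ for all s ≥ 0. Define the storage S_o(t) := (1/2)⟨u(t) − u*, τ_u·(u(t) − u*)⟩ + (1/2)⟨φ(t) − φ*, τ_φ·(φ(t) − φ*)⟩ + (1/2)⟨λ(t) − λ*, τ_λ·(λ(t) − λ*)⟩ + (1/2)⟨π(t) − π*, τ_π·(π(t) − π*)⟩ + (1/2)⟨ρ⁺(t) − ρ⁺*, τ_+·(ρ⁺(t) − ρ⁺*)⟩ + (1/2)⟨ρ⁻(t) − ρ⁻*, τ_−·(ρ⁻(t) − ρ⁻*)⟩. Then for all t, S_o'(t) ≤ −⟨u(t) − u*, ∇J(u(t)) − ∇J(u*)⟩ − κ·‖r(t)‖² − ⟨u(t) − u*, y(t)⟩. -/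
open Matrix

/-!
Each summand of `S_o` is a `τ`-weighted squared distance to the equilibrium, so
`S_o' = Σ ⟨x - x*, τ x'⟩` over the six blocks. For the projected blocks `u, ρ⁺, ρ⁻`, testing the
variational inequality of the dynamics at the equilibrium and the normal-cone condition of the
equilibrium at the current state bounds the summand by `⟨x - x*, F x - F x*⟩`; for `φ, λ, π` the
equilibrium equations rewrite the dynamics in the deviations. Since `L` and `B` are symmetric,
the coupling terms between the blocks are skew-symmetric and cancel, and `r = G δu - L δφ`
turns the `κ`-terms into `-κ ‖r‖²`.
-/

section Storage

variable {ι ι' : Type*} [Fintype ι']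

theorem HasDerivAt.mulVec (Q : Matrix ι ι' ℝ) {x : ℝ → ι' → ℝ}
    {x' : ι' → ℝ} {t : ℝ} (hx : HasDerivAt x x' t) :
    HasDerivAt (fun s => Q *ᵥ x s) (Q *ᵥ x') t :=
  hasDerivAt_pi.mpr fun i =>
    HasDerivAt.fun_sum (u := Finset.univ) fun j _ => (hasDerivAt_pi.mp hx j).const_mul (Q i j)

variable [Fintype ι]

theorem HasDerivAt.dotProduct {f g : ℝ → ι → ℝ} {f' g' : ι → ℝ} {t : ℝ}
    (hf : HasDerivAt f f' t) (hg : HasDerivAt g g' t) :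
    HasDerivAt (fun s => f s ⬝ᵥ g s) (f' ⬝ᵥ g t + f t ⬝ᵥ g') t := by
  have h := HasDerivAt.fun_sum (u := Finset.univ) fun i _ =>
    (hasDerivAt_pi.mp hf i).fun_mul (hasDerivAt_pi.mp hg i)
  rw [Finset.sum_add_distrib] at h
  exact h

theorem hasDerivAt_half_dotProduct_mulVec_sub {Q : Matrix ι ι ℝ} (hQ : Qᵀ = Q)
    {x : ℝ → ι → ℝ} {x' : ι → ℝ} (xs : ι → ℝ) {t : ℝ} (hx : HasDerivAt x x' t) :
    HasDerivAt (fun s => (1/2) * ((x s - xs) ⬝ᵥ (Q *ᵥ (x s - xs))))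
      ((x t - xs) ⬝ᵥ (Q *ᵥ x')) t := by
  have hδ := hx.sub_const xs
  refine ((hδ.dotProduct (hδ.mulVec Q)).const_mul (1/2)).congr_deriv ?_
  rw [← dotProduct_transpose_mulVec Q x', hQ]
  ring

end Storage

theorem dotProduct_sub_le_of_variational {ι R : Type*} [Fintype ι] [CommRing R] [LinearOrder R]
    [IsStrictOrderedRing R] {K : Set (ι → R)} {x xs v w ws : ι → R} (hx : x ∈ K) (hxs : xs ∈ K)
    (hvi : ∀ z ∈ K, (x - z) ⬝ᵥ v ≤ (x - z) ⬝ᵥ w) (hnc : ∀ z ∈ K, ws ⬝ᵥ (z - xs) ≤ 0) :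
    (x - xs) ⬝ᵥ v ≤ (x - xs) ⬝ᵥ (w - ws) := by
  have := hvi xs hxs
  have := hnc x hx
  rw [dotProduct_sub, dotProduct_comm (x - xs) ws]
  linarith

theorem dotProduct_mulVec_comm_of_transpose_eq {m n R : Type*} [Fintype m] [Fintype n]
    [CommRing R] {A : Matrix m n R} {A' : Matrix n m R}
    (h : Aᵀ = A') (x : n → R) (y : m → R) : x ⬝ᵥ (A' *ᵥ y) = y ⬝ᵥ (A *ᵥ x) := by
  rw [← h, dotProduct_transpose_mulVec]

section Interconnection

variable {ιu ιφ ιπ ιρ R : Type*} [Fintype ιu] [Fintype ιφ] [Fintype ιπ] [Fintype ιρ]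
  [CommRing R]

theorem interconnection_dotProduct_sum_eq (G : Matrix ιφ ιu R) (C : Matrix ιφ ιρ R)
    {B : Matrix ιρ ιρ R} (T : Matrix ιπ ιρ R) {L : Matrix ιφ ιφ R} (hB : Bᵀ = B) (hL : Lᵀ = L)
    (κ : R) (δu : ιu → R) (δφ δl : ιφ → R) (δπ : ιπ → R) (δp δm : ιρ → R) {r : ιφ → R}
    (hr : r = G *ᵥ δu - L *ᵥ δφ) :
    δu ⬝ᵥ (-(Gᵀ *ᵥ δl) - κ • (Gᵀ *ᵥ r))
      + δφ ⬝ᵥ (L *ᵥ δl - (C * B) *ᵥ (Tᵀ *ᵥ δπ + δp - δm) + κ • (L *ᵥ r))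
      + δl ⬝ᵥ r + δπ ⬝ᵥ ((T * B * Cᵀ) *ᵥ δφ) + δp ⬝ᵥ ((B * Cᵀ) *ᵥ δφ)
      - δm ⬝ᵥ ((B * Cᵀ) *ᵥ δφ)
      = -(κ * (r ⬝ᵥ r)) := by
  have hTBC : (T * B * Cᵀ)ᵀ = C * B * Tᵀ := by
    simp only [transpose_mul, transpose_transpose, hB, Matrix.mul_assoc]
  have hBC : (B * Cᵀ)ᵀ = C * B := by
    rw [transpose_mul, transpose_transpose, hB]
  have hrr : r ⬝ᵥ r = r ⬝ᵥ (G *ᵥ δu) - r ⬝ᵥ (L *ᵥ δφ) := by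
    rw [← dotProduct_sub, ← hr]
  have hlr : δl ⬝ᵥ r = δl ⬝ᵥ (G *ᵥ δu) - δl ⬝ᵥ (L *ᵥ δφ) := by
    rw [← dotProduct_sub, ← hr]
  simp only [dotProduct_add, dotProduct_sub, dotProduct_neg, dotProduct_smul, smul_eq_mul,
    mulVec_add, mulVec_sub, mulVec_mulVec]
  rw [dotProduct_transpose_mulVec G δu δl, dotProduct_transpose_mulVec G δu r,
    dotProduct_mulVec_comm_of_transpose_eq hL δφ δl,
    dotProduct_mulVec_comm_of_transpose_eq hL δφ r,
    dotProduct_mulVec_comm_of_transpose_eq hTBC δφ δπ,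
    dotProduct_mulVec_comm_of_transpose_eq hBC δφ δp,
    dotProduct_mulVec_comm_of_transpose_eq hBC δφ δm, hrr, hlr]
  ring

end Interconnection

theorem stmt10_general {n m ng nt : ℕ}
    (G : Matrix (Fin n) (Fin ng) ℝ) (C : Matrix (Fin n) (Fin m) ℝ)
    (B : Matrix (Fin m) (Fin m) ℝ) (hB : B.IsDiag)
    (T : Matrix (Fin nt) (Fin m) ℝ)
    (L : Matrix (Fin n) (Fin n) ℝ) (hL : L = C * B * Cᵀ)
    -- diagonal positive definite gain matrices
    (dtu : Fin ng → ℝ) (dtφ dtl : Fin n → ℝ) (dtπ : Fin nt → ℝ) (dtp dtm : Fin m → ℝ)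
    (τu : Matrix (Fin ng) (Fin ng) ℝ) (hτu : τu = Matrix.diagonal dtu)
    (τφ : Matrix (Fin n) (Fin n) ℝ) (hτφ : τφ = Matrix.diagonal dtφ)
    (τl : Matrix (Fin n) (Fin n) ℝ) (hτl : τl = Matrix.diagonal dtl)
    (τπ : Matrix (Fin nt) (Fin nt) ℝ) (hτπ : τπ = Matrix.diagonal dtπ)
    (τp : Matrix (Fin m) (Fin m) ℝ) (hτp : τp = Matrix.diagonal dtp)
    (τm : Matrix (Fin m) (Fin m) ℝ) (hτm : τm = Matrix.diagonal dtm)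
    (κ : ℝ)
    (gradJ : (Fin ng → ℝ) → (Fin ng → ℝ))
    (Ω : Set (Fin ng → ℝ))
    (d : Fin n → ℝ) (Psch : Fin nt → ℝ) (flo fhi : Fin m → ℝ)
    -- the starred equilibrium point
    (ustar : Fin ng → ℝ) (φstar lamstar : Fin n → ℝ) (pistar : Fin nt → ℝ)
    (rpstar rmstar : Fin m → ℝ)
    (hustar : ustar ∈ Ω) (hrpstar : 0 ≤ rpstar) (hrmstar : 0 ≤ rmstar)
    (heq1 : G *ᵥ ustar - d - L *ᵥ φstar = 0)
    (heq2 : (T * B * Cᵀ) *ᵥ φstar = Psch)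
    (heq3 : -(L *ᵥ lamstar) + (C * B * Tᵀ) *ᵥ pistar + (C * B) *ᵥ (rpstar - rmstar) = 0)
    (hnc1 : ∀ z ∈ Ω, (-(gradJ ustar) - Gᵀ *ᵥ lamstar) ⬝ᵥ (z - ustar) ≤ 0)
    (hnc2 : ∀ s : Fin m → ℝ, 0 ≤ s → ((B * Cᵀ) *ᵥ φstar - fhi) ⬝ᵥ (s - rpstar) ≤ 0)
    (hnc3 : ∀ s : Fin m → ℝ, 0 ≤ s → (flo - (B * Cᵀ) *ᵥ φstar) ⬝ᵥ (s - rmstar) ≤ 0)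
    -- trajectories and their derivatives
    (u u' : ℝ → Fin ng → ℝ) (φ φ' lam lam' : ℝ → Fin n → ℝ)
    (piv piv' : ℝ → Fin nt → ℝ) (rp rp' rm rm' : ℝ → Fin m → ℝ)
    (y : ℝ → Fin ng → ℝ)
    (hud : ∀ t, HasDerivAt u (u' t) t) (hφd : ∀ t, HasDerivAt φ (φ' t) t)
    (hld : ∀ t, HasDerivAt lam (lam' t) t) (hπd : ∀ t, HasDerivAt piv (piv' t) t)
    (hrpd : ∀ t, HasDerivAt rp (rp' t) t) (hrmd : ∀ t, HasDerivAt rm (rm' t) t)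
    (huΩ : ∀ t, u t ∈ Ω) (hrpnn : ∀ t, 0 ≤ rp t) (hrmnn : ∀ t, 0 ≤ rm t)
    -- residual and projected primal field
    (r : ℝ → Fin n → ℝ) (hr : r = fun t => G *ᵥ u t - d - L *ᵥ φ t)
    (ξu : ℝ → Fin ng → ℝ)
    (hξ : ξu = fun t => -(gradJ (u t)) - Gᵀ *ᵥ lam t - κ • (Gᵀ *ᵥ r t) - y t)
    -- (a)-(e): controller dynamics
    (ha : ∀ t, ∀ z ∈ Ω, (u t - z) ⬝ᵥ (τu *ᵥ u' t) ≤ (u t - z) ⬝ᵥ ξu t)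
    (hb : ∀ t, τφ *ᵥ φ' t =
        L *ᵥ lam t - (C * B) *ᵥ (Tᵀ *ᵥ piv t + rp t - rm t) + κ • (L *ᵥ r t))
    (hc : ∀ t, τl *ᵥ lam' t = r t)
    (hdπ : ∀ t, τπ *ᵥ piv' t = (T * B * Cᵀ) *ᵥ φ t - Psch)
    (he1 : ∀ t, ∀ s : Fin m → ℝ, 0 ≤ s →
        (rp t - s) ⬝ᵥ (τp *ᵥ rp' t) ≤ (rp t - s) ⬝ᵥ ((B * Cᵀ) *ᵥ φ t - fhi))
    (he2 : ∀ t, ∀ s : Fin m → ℝ, 0 ≤ s →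
        (rm t - s) ⬝ᵥ (τm *ᵥ rm' t) ≤ (rm t - s) ⬝ᵥ (flo - (B * Cᵀ) *ᵥ φ t))
    -- the storage function
    (So : ℝ → ℝ)
    (hSo : So = fun t =>
      (1/2) * ((u t - ustar) ⬝ᵥ (τu *ᵥ (u t - ustar))) +
      (1/2) * ((φ t - φstar) ⬝ᵥ (τφ *ᵥ (φ t - φstar))) +
      (1/2) * ((lam t - lamstar) ⬝ᵥ (τl *ᵥ (lam t - lamstar))) +
      (1/2) * ((piv t - pistar) ⬝ᵥ (τπ *ᵥ (piv t - pistar))) +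
      (1/2) * ((rp t - rpstar) ⬝ᵥ (τp *ᵥ (rp t - rpstar))) +
      (1/2) * ((rm t - rmstar) ⬝ᵥ (τm *ᵥ (rm t - rmstar)))) :
    ∀ t, ∃ s : ℝ, HasDerivAt So s t ∧
      s ≤ -((u t - ustar) ⬝ᵥ (gradJ (u t) - gradJ ustar)) - κ * (r t ⬝ᵥ r t)
          - (u t - ustar) ⬝ᵥ y t := by
  intro t
  subst hτu hτφ hτl hτπ hτp hτm hSo
  have hBs : Bᵀ = B := hB.isSymm
  have hLs : Lᵀ = L := by
    rw [hL, transpose_mul, transpose_mul, transpose_transpose, hBs, Matrix.mul_assoc]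
  refine ⟨_, (((((hasDerivAt_half_dotProduct_mulVec_sub (diagonal_transpose dtu) ustar (hud t)).add
    (hasDerivAt_half_dotProduct_mulVec_sub (diagonal_transpose dtφ) φstar (hφd t))).add
    (hasDerivAt_half_dotProduct_mulVec_sub (diagonal_transpose dtl) lamstar (hld t))).add
    (hasDerivAt_half_dotProduct_mulVec_sub (diagonal_transpose dtπ) pistar (hπd t))).add
    (hasDerivAt_half_dotProduct_mulVec_sub (diagonal_transpose dtp) rpstar (hrpd t))).add
    (hasDerivAt_half_dotProduct_mulVec_sub (diagonal_transpose dtm) rmstar (hrmd t)), ?_⟩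
  have hrt : r t = G *ᵥ (u t - ustar) - L *ᵥ (φ t - φstar) := by
    rw [hr, mulVec_sub, mulVec_sub]
    linear_combination (norm := module) heq1
  have hu := (dotProduct_sub_le_of_variational (huΩ t) hustar (ha t) hnc1).trans_eq
    (show _ = -((u t - ustar) ⬝ᵥ (gradJ (u t) - gradJ ustar))
      + (u t - ustar) ⬝ᵥ (-(Gᵀ *ᵥ (lam t - lamstar)) - κ • (Gᵀ *ᵥ r t)) - (u t - ustar) ⬝ᵥ y t by
      rw [← dotProduct_neg, ← dotProduct_add, ← dotProduct_sub, hξ, mulVec_sub]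
      congr 1
      module)
  have hφ : diagonal dtφ *ᵥ φ' t = L *ᵥ (lam t - lamstar)
      - (C * B) *ᵥ (Tᵀ *ᵥ (piv t - pistar) + (rp t - rpstar) - (rm t - rmstar))
      + κ • (L *ᵥ r t) := by
    rw [mulVec_sub] at heq3
    rw [hb t]
    simp only [mulVec_sub, mulVec_add, mulVec_mulVec]
    linear_combination (norm := module) -heq3
  have hπ : diagonal dtπ *ᵥ piv' t = (T * B * Cᵀ) *ᵥ (φ t - φstar) := by
    rw [hdπ t, mulVec_sub, heq2]
  have hp := (dotProduct_sub_le_of_variational (K := Set.Ici 0) (hrpnn t) hrpstar (he1 t)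
    hnc2).trans_eq (by rw [sub_sub_sub_cancel_right, ← mulVec_sub])
  have hm := (dotProduct_sub_le_of_variational (K := Set.Ici 0) (hrmnn t) hrmstar (he2 t)
    hnc3).trans_eq (show _ = -((rm t - rmstar) ⬝ᵥ ((B * Cᵀ) *ᵥ (φ t - φstar))) by
      rw [sub_sub_sub_cancel_left, ← dotProduct_neg, mulVec_sub, neg_sub])
  have hbalance := interconnection_dotProduct_sum_eq G C T hBs hLs κ (u t - ustar) (φ t - φstar)
    (lam t - lamstar) (piv t - pistar) (rp t - rpstar) (rm t - rmstar) hrt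
  rw [hφ, hc t, hπ]
  linarith

theorem stmt10 {n m ng nt : ℕ}
    (G : Matrix (Fin n) (Fin ng) ℝ) (C : Matrix (Fin n) (Fin m) ℝ)
    (B : Matrix (Fin m) (Fin m) ℝ) (hB : B.IsDiag)
    (T : Matrix (Fin nt) (Fin m) ℝ)
    (L : Matrix (Fin n) (Fin n) ℝ) (hL : L = C * B * Cᵀ)
    -- diagonal positive definite gain matrices
    (dtu : Fin ng → ℝ) (dtφ dtl : Fin n → ℝ) (dtπ : Fin nt → ℝ) (dtp dtm : Fin m → ℝ)
    (hdtu : ∀ i, 0 < dtu i) (hdtφ : ∀ i, 0 < dtφ i) (hdtl : ∀ i, 0 < dtl i)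
    (hdtπ : ∀ i, 0 < dtπ i) (hdtp : ∀ i, 0 < dtp i) (hdtm : ∀ i, 0 < dtm i)
    (τu : Matrix (Fin ng) (Fin ng) ℝ) (hτu : τu = Matrix.diagonal dtu)
    (τφ : Matrix (Fin n) (Fin n) ℝ) (hτφ : τφ = Matrix.diagonal dtφ)
    (τl : Matrix (Fin n) (Fin n) ℝ) (hτl : τl = Matrix.diagonal dtl)
    (τπ : Matrix (Fin nt) (Fin nt) ℝ) (hτπ : τπ = Matrix.diagonal dtπ)
    (τp : Matrix (Fin m) (Fin m) ℝ) (hτp : τp = Matrix.diagonal dtp)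
    (τm : Matrix (Fin m) (Fin m) ℝ) (hτm : τm = Matrix.diagonal dtm)
    (κ : ℝ) (hκ : 0 < κ)
    (J : (Fin ng → ℝ) → ℝ) (hJ : ContDiff ℝ 1 J)
    (gradJ : (Fin ng → ℝ) → (Fin ng → ℝ))
    (hgrad : ∀ a v : Fin ng → ℝ, fderiv ℝ J a v = gradJ a ⬝ᵥ v)
    (ulo uhi : Fin ng → ℝ)
    (Ω : Set (Fin ng → ℝ)) (hΩ : Ω = {a | ulo ≤ a ∧ a ≤ uhi}) (hΩne : Ω.Nonempty)
    (d : Fin n → ℝ) (Psch : Fin nt → ℝ) (flo fhi : Fin m → ℝ)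
    -- the starred equilibrium point
    (ustar : Fin ng → ℝ) (φstar lamstar : Fin n → ℝ) (pistar : Fin nt → ℝ)
    (rpstar rmstar : Fin m → ℝ)
    (hustar : ustar ∈ Ω) (hrpstar : 0 ≤ rpstar) (hrmstar : 0 ≤ rmstar)
    (heq1 : G *ᵥ ustar - d - L *ᵥ φstar = 0)
    (heq2 : (T * B * Cᵀ) *ᵥ φstar = Psch)
    (heq3 : -(L *ᵥ lamstar) + (C * B * Tᵀ) *ᵥ pistar + (C * B) *ᵥ (rpstar - rmstar) = 0)
    (hnc1 : ∀ z ∈ Ω, (-(gradJ ustar) - Gᵀ *ᵥ lamstar) ⬝ᵥ (z - ustar) ≤ 0)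
    (hnc2 : ∀ s : Fin m → ℝ, 0 ≤ s → ((B * Cᵀ) *ᵥ φstar - fhi) ⬝ᵥ (s - rpstar) ≤ 0)
    (hnc3 : ∀ s : Fin m → ℝ, 0 ≤ s → (flo - (B * Cᵀ) *ᵥ φstar) ⬝ᵥ (s - rmstar) ≤ 0)
    -- trajectories and their derivatives
    (u u' : ℝ → Fin ng → ℝ) (φ φ' lam lam' : ℝ → Fin n → ℝ)
    (piv piv' : ℝ → Fin nt → ℝ) (rp rp' rm rm' : ℝ → Fin m → ℝ)
    (y : ℝ → Fin ng → ℝ) (hy : Continuous y)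
    (hud : ∀ t, HasDerivAt u (u' t) t) (hφd : ∀ t, HasDerivAt φ (φ' t) t)
    (hld : ∀ t, HasDerivAt lam (lam' t) t) (hπd : ∀ t, HasDerivAt piv (piv' t) t)
    (hrpd : ∀ t, HasDerivAt rp (rp' t) t) (hrmd : ∀ t, HasDerivAt rm (rm' t) t)
    (huΩ : ∀ t, u t ∈ Ω) (hrpnn : ∀ t, 0 ≤ rp t) (hrmnn : ∀ t, 0 ≤ rm t)
    -- residual and projected primal field
    (r : ℝ → Fin n → ℝ) (hr : r = fun t => G *ᵥ u t - d - L *ᵥ φ t)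
    (ξu : ℝ → Fin ng → ℝ)
    (hξ : ξu = fun t => -(gradJ (u t)) - Gᵀ *ᵥ lam t - κ • (Gᵀ *ᵥ r t) - y t)
    -- (a)-(e): controller dynamics
    (ha : ∀ t, ∀ z ∈ Ω, (u t - z) ⬝ᵥ (τu *ᵥ u' t) ≤ (u t - z) ⬝ᵥ ξu t)
    (hb : ∀ t, τφ *ᵥ φ' t =
        L *ᵥ lam t - (C * B) *ᵥ (Tᵀ *ᵥ piv t + rp t - rm t) + κ • (L *ᵥ r t))
    (hc : ∀ t, τl *ᵥ lam' t = r t)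
    (hdπ : ∀ t, τπ *ᵥ piv' t = (T * B * Cᵀ) *ᵥ φ t - Psch)
    (he1 : ∀ t, ∀ s : Fin m → ℝ, 0 ≤ s →
        (rp t - s) ⬝ᵥ (τp *ᵥ rp' t) ≤ (rp t - s) ⬝ᵥ ((B * Cᵀ) *ᵥ φ t - fhi))
    (he2 : ∀ t, ∀ s : Fin m → ℝ, 0 ≤ s →
        (rm t - s) ⬝ᵥ (τm *ᵥ rm' t) ≤ (rm t - s) ⬝ᵥ (flo - (B * Cᵀ) *ᵥ φ t))
    -- the storage function
    (So : ℝ → ℝ)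
    (hSo : So = fun t =>
      (1/2) * ((u t - ustar) ⬝ᵥ (τu *ᵥ (u t - ustar))) +
      (1/2) * ((φ t - φstar) ⬝ᵥ (τφ *ᵥ (φ t - φstar))) +
      (1/2) * ((lam t - lamstar) ⬝ᵥ (τl *ᵥ (lam t - lamstar))) +
      (1/2) * ((piv t - pistar) ⬝ᵥ (τπ *ᵥ (piv t - pistar))) +
      (1/2) * ((rp t - rpstar) ⬝ᵥ (τp *ᵥ (rp t - rpstar))) +
      (1/2) * ((rm t - rmstar) ⬝ᵥ (τm *ᵥ (rm t - rmstar)))) :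
    ∀ t, ∃ s : ℝ, HasDerivAt So s t ∧
      s ≤ -((u t - ustar) ⬝ᵥ (gradJ (u t) - gradJ ustar)) - κ * (r t ⬝ᵥ r t)
          - (u t - ustar) ⬝ᵥ y t :=
  stmt10_general G C B hB T L hL dtu dtφ dtl dtπ dtp dtm τu hτu τφ hτφ τl hτl τπ hτπ τp hτp τm hτm κ
    gradJ Ω d Psch flo fhi ustar φstar lamstar pistar rpstar rmstar hustar hrpstar hrmstar heq1 heq2
    heq3 hnc1 hnc2 hnc3 u u' φ φ' lam lam' piv piv' rp rp' rm rm' y hud hφd hld hπd hrpd hrmd huΩ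
    hrpnn hrmnn r hr ξu hξ ha hb hc hdπ he1 he2 So hSo
end

section
/- Let (Ω, 𝓕, ℙ) be a probability space with a filtration (𝓕_k)_{k∈ℕ}, and let (V_k)_{k∈ℕ} and (γ_k)_{k∈ℕ} be sequences of nonnegative random variables such that, for each k, V_k and γ_k² are 𝓕_k-measurable and integrable. Let a₁, a₂, a₃, C_s > 0 and ε > 0 satisfy C_s·ε ≤ a₃/2 and a₃·ε/(2a₂) ≤ 1. Assume that almost surely, for all k: a₁·γ_k² ≤ V_k ≤ a₂·γ_k² and 𝔼[V_{k+1} | 𝓕_k] ≤ V_k − a₃·ε·γ_k² + C_s·ε²·γ_k². Then, with ν := a₃/(2a₂), for all k ∈ ℕ: 𝔼[γ_k²] ≤ (a₂/a₁)·(1 − ν·ε)^k·𝔼[γ_0²]. -/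
/-! Bounding `γ_k²` above by `V_k / a₂` turns the drift condition into the contraction
`𝔼[V_{k+1} | 𝓕_k] ≤ (1 - ν ε) V_k`; taking expectations and iterating gives
`𝔼[V_k] ≤ (1 - ν ε)^k 𝔼[V_0]`, and the sandwich `a₁ γ² ≤ V ≤ a₂ γ²` converts this into the
bound on `𝔼[γ_k²]`. -/

open MeasureTheory

section

variable {Ω : Type*} {m m₀ : MeasurableSpace Ω} {μ : Measure Ω}

theorem integral_le_of_condExp_le {f g : Ω → ℝ} (hm : m ≤ m₀) [SigmaFinite (μ.trim hm)]
    (hg : Integrable g μ) (h : μ[f | m] ≤ᵐ[μ] g) : ∫ ω, f ω ∂μ ≤ ∫ ω, g ω ∂μ := by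
  rw [← integral_condExp hm]
  exact integral_mono_ae integrable_condExp hg h

theorem integral_le_pow_mul_of_condExp_le_mul {ℱ : Filtration ℕ m₀} [SigmaFiniteFiltration μ ℱ]
    {V : ℕ → Ω → ℝ} {ρ : ℝ} (hρ : 0 ≤ ρ) (hV : ∀ k, Integrable (V k) μ)
    (h : ∀ k, μ[V (k + 1) | ℱ k] ≤ᵐ[μ] fun ω => ρ * V k ω) (k : ℕ) :
    ∫ ω, V k ω ∂μ ≤ ρ ^ k * ∫ ω, V 0 ω ∂μ :=
  le_geom (u := fun k => ∫ ω, V k ω ∂μ) hρ k fun j _ =>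
    (integral_le_of_condExp_le (ℱ.le j) ((hV j).const_mul ρ) (h j)).trans_eq
      (integral_const_mul ρ _)

theorem perturbed_decrease_le_contraction {v g a₂ a₃ Cs ε : ℝ} (ha₂ : 0 < a₂) (ha₃ : 0 ≤ a₃)
    (hε : 0 ≤ ε) (hstep : Cs * ε ≤ a₃ / 2) (hg : 0 ≤ g) (hv : v ≤ a₂ * g) :
    v - a₃ * ε * g + Cs * ε ^ 2 * g ≤ (1 - a₃ / (2 * a₂) * ε) * v := by
  have hperturb : Cs * ε ^ 2 * g ≤ a₃ / 2 * ε * g := by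
    have := mul_le_mul_of_nonneg_right hstep (mul_nonneg hε hg)
    linarith
  have hg_lower : a₃ / 2 * ε * (v / a₂) ≤ a₃ / 2 * ε * g := by
    gcongr
    rwa [div_le_iff₀ ha₂, mul_comm]
  calc v - a₃ * ε * g + Cs * ε ^ 2 * g ≤ v - a₃ / 2 * ε * (v / a₂) := by linarith
    _ = (1 - a₃ / (2 * a₂) * ε) * v := by field_simp

end

theorem stmt14_general {Ω : Type*} {mΩ : MeasurableSpace Ω} {μ : Measure Ω} [IsProbabilityMeasure μ]
    (ℱ : Filtration ℕ mΩ)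
    (V γ : ℕ → Ω → ℝ)
    (hVint : ∀ k, Integrable (V k) μ)
    (hγint : ∀ k, Integrable (fun ω => (γ k ω) ^ 2) μ)
    (a₁ a₂ a₃ Cs ε : ℝ) (ha₁ : 0 < a₁) (ha₂ : 0 < a₂) (ha₃ : 0 < a₃)
    (hε : 0 < ε) (hstep : Cs * ε ≤ a₃ / 2) (hstep2 : a₃ * ε / (2 * a₂) ≤ 1)
    (hsandwich : ∀ᵐ ω ∂μ, ∀ k, a₁ * (γ k ω) ^ 2 ≤ V k ω ∧ V k ω ≤ a₂ * (γ k ω) ^ 2)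
    (hdecrease : ∀ k, μ[V (k + 1) | ℱ k] ≤ᵐ[μ]
        fun ω => V k ω - a₃ * ε * (γ k ω) ^ 2 + Cs * ε ^ 2 * (γ k ω) ^ 2)
    (ν : ℝ) (hν : ν = a₃ / (2 * a₂)) :
    ∀ k, ∫ ω, (γ k ω) ^ 2 ∂μ ≤ (a₂ / a₁) * (1 - ν * ε) ^ k * ∫ ω, (γ 0 ω) ^ 2 ∂μ := by
  intro k
  subst hν
  have hρ : 0 ≤ 1 - a₃ / (2 * a₂) * ε := by rw [div_mul_eq_mul_div]; linarith
  have hcontract : ∀ j, μ[V (j + 1) | ℱ j] ≤ᵐ[μ] fun ω => (1 - a₃ / (2 * a₂) * ε) * V j ω :=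
    fun j => by
      filter_upwards [hdecrease j, hsandwich] with ω hdec hV
      exact hdec.trans
        (perturbed_decrease_le_contraction ha₂ ha₃.le hε.le hstep (sq_nonneg _) (hV j).2)
  have hlower : a₁ * ∫ ω, (γ k ω) ^ 2 ∂μ ≤ ∫ ω, V k ω ∂μ := by
    rw [← integral_const_mul]
    refine integral_mono_ae ((hγint k).const_mul _) (hVint k) ?_
    filter_upwards [hsandwich] with ω h using (h k).1
  have hupper : ∫ ω, V 0 ω ∂μ ≤ a₂ * ∫ ω, (γ 0 ω) ^ 2 ∂μ := by
    rw [← integral_const_mul]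
    refine integral_mono_ae (hVint 0) ((hγint 0).const_mul _) ?_
    filter_upwards [hsandwich] with ω h using (h 0).2
  rw [div_mul_eq_mul_div, div_mul_eq_mul_div, le_div_iff₀ ha₁, mul_comm _ a₁]
  calc a₁ * ∫ ω, (γ k ω) ^ 2 ∂μ
      ≤ (1 - a₃ / (2 * a₂) * ε) ^ k * ∫ ω, V 0 ω ∂μ :=
        hlower.trans (integral_le_pow_mul_of_condExp_le_mul hρ hVint hcontract k)
    _ ≤ (1 - a₃ / (2 * a₂) * ε) ^ k * (a₂ * ∫ ω, (γ 0 ω) ^ 2 ∂μ) := by gcongr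
    _ = a₂ * (1 - a₃ / (2 * a₂) * ε) ^ k * ∫ ω, (γ 0 ω) ^ 2 ∂μ := by ring

theorem stmt14 {Ω : Type*} {mΩ : MeasurableSpace Ω} {μ : Measure Ω} [IsProbabilityMeasure μ]
    (ℱ : Filtration ℕ mΩ)
    (V γ : ℕ → Ω → ℝ)
    (hVnn : ∀ k ω, 0 ≤ V k ω) (hγnn : ∀ k ω, 0 ≤ γ k ω)
    (hVmeas : ∀ k, StronglyMeasurable[ℱ k] (V k))
    (hγmeas : ∀ k, StronglyMeasurable[ℱ k] (fun ω => (γ k ω) ^ 2))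
    (hVint : ∀ k, Integrable (V k) μ)
    (hγint : ∀ k, Integrable (fun ω => (γ k ω) ^ 2) μ)
    (a₁ a₂ a₃ Cs ε : ℝ) (ha₁ : 0 < a₁) (ha₂ : 0 < a₂) (ha₃ : 0 < a₃) (hCs : 0 < Cs)
    (hε : 0 < ε) (hstep : Cs * ε ≤ a₃ / 2) (hstep2 : a₃ * ε / (2 * a₂) ≤ 1)
    (hsandwich : ∀ᵐ ω ∂μ, ∀ k, a₁ * (γ k ω) ^ 2 ≤ V k ω ∧ V k ω ≤ a₂ * (γ k ω) ^ 2)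
    (hdecrease : ∀ k, μ[V (k + 1) | ℱ k] ≤ᵐ[μ]
        fun ω => V k ω - a₃ * ε * (γ k ω) ^ 2 + Cs * ε ^ 2 * (γ k ω) ^ 2)
    (ν : ℝ) (hν : ν = a₃ / (2 * a₂)) :
    ∀ k, ∫ ω, (γ k ω) ^ 2 ∂μ ≤ (a₂ / a₁) * (1 - ν * ε) ^ k * ∫ ω, (γ 0 ω) ^ 2 ∂μ :=
  stmt14_general ℱ V γ hVint hγint a₁ a₂ a₃ Cs ε ha₁ ha₂ ha₃ hε hstep hstep2 hsandwich hdecrease ν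
    hν
end
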